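/- arXiv:2109.09370 — 5 statements merged into one kernel-verified Lean document; each statement's English description precedes it below -/
import Mathlib

section
/- Fix l ≥ 3 and let A^{(n)}_l = ∪_{k=1}^{n-l+1} A^{(n)}_{l;k} denote the event that some set of l consecutive numbers appears in a set of l consecutive positions. Then under the uniform probability measure P_n on S_n, P_n(A^{(n)}_l) ~ l!/n^{l-2} as n → ∞; that is, lim_{n→∞} n^{l-2} · |A^{(n)}_l| / n! = l!. -/
open Filter

def Contains {n m : ℕ} (σ : Fin n → Fin n) (τ : Fin m → Fin m) : Prop :=
  ∃ f : Fin m → Fin n, StrictMono f ∧ ∀ j k : Fin m, σ (f j) < σ (f k) ↔ τ j < τ k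

def Avoids {n m : ℕ} (σ : Fin n → Fin n) (τ : Fin m → Fin m) : Prop :=
  ¬ Contains σ τ

def AvoidSet (n : ℕ) {m : ℕ} (τ : Equiv.Perm (Fin m)) : Set (Equiv.Perm (Fin n)) :=
  {σ : Equiv.Perm (Fin n) | Avoids ⇑σ ⇑τ}

def ClusterAt {n : ℕ} (l k a : ℕ) (σ : Equiv.Perm (Fin n)) : Prop :=
  (Finset.univ.filter fun i : Fin n => a ≤ (i : ℕ) + 1 ∧ (i : ℕ) + 1 < a + l).image
      (fun i => (σ i : ℕ) + 1) = Finset.Ico k (k + l)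

def ClusterEvent (n l k : ℕ) : Set (Equiv.Perm (Fin n)) :=
  {σ : Equiv.Perm (Fin n) | ∃ a : ℕ, 1 ≤ a ∧ a ≤ n - l + 1 ∧ ClusterAt l k a σ}

def ClusterFree {m : ℕ} (τ : Equiv.Perm (Fin m)) : Prop :=
  ∀ l a k : ℕ, 2 ≤ l → l ≤ m - 1 → 1 ≤ a → a + l ≤ m + 1 → ¬ ClusterAt l k a τ

def ContainsTightly12 {m : ℕ} (τ : Equiv.Perm (Fin m)) : Prop :=
  ∃ i j : Fin m, (j : ℕ) = (i : ℕ) + 1 ∧ (τ j : ℕ) = (τ i : ℕ) + 1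

def ContainsTightly21 {m : ℕ} (τ : Equiv.Perm (Fin m)) : Prop :=
  ∃ i j : Fin m, (j : ℕ) = (i : ℕ) + 1 ∧ (τ i : ℕ) = (τ j : ℕ) + 1

def perm123 : Equiv.Perm (Fin 3) := Equiv.refl (Fin 3)

def perm321 : Equiv.Perm (Fin 3) :=
  ⟨![2, 1, 0], ![2, 1, 0], by intro x; fin_cases x <;> rfl, by intro x; fin_cases x <;> rfl⟩

def p2413 : Equiv.Perm (Fin 4) :=
  ⟨![1, 3, 0, 2], ![2, 0, 3, 1], by intro x; fin_cases x <;> rfl, by intro x; fin_cases x <;> rfl⟩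

def p3142 : Equiv.Perm (Fin 4) :=
  ⟨![2, 0, 3, 1], ![1, 3, 0, 2], by intro x; fin_cases x <;> rfl, by intro x; fin_cases x <;> rfl⟩

def SepSet (n : ℕ) : Set (Equiv.Perm (Fin n)) :=
  {σ : Equiv.Perm (Fin n) | Avoids ⇑σ ⇑p2413 ∧ Avoids ⇑σ ⇑p3142}



open Finset
set_option maxHeartbeats 1000000

section Aux

instance {n : ℕ} (l k a : ℕ) (σ : Equiv.Perm (Fin n)) : Decidable (ClusterAt l k a σ) := by
  unfold ClusterAt; exact inferInstance

variable {α : Type*} [Fintype α] [DecidableEq α]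

/-- Permutations mapping `s` onto `t` correspond to pairs of bijections. -/
def permImageEquiv (s t : Finset α) :
    {σ : Equiv.Perm α // s.image σ = t} ≃
      ({x // x ∈ s} ≃ {x // x ∈ t}) × ({x // x ∉ s} ≃ {x // x ∉ t}) where
  toFun := fun ⟨σ, hσ⟩ => by
    have hmem : ∀ x, x ∈ s ↔ σ x ∈ t := by
      intro x
      constructor
      · intro hx; rw [← hσ]; exact Finset.mem_image_of_mem _ hx
      · intro hx; rw [← hσ] at hx
        obtain ⟨y, hy, hyx⟩ := Finset.mem_image.mp hx
        rwa [← σ.injective hyx]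
    exact (σ.subtypeEquiv hmem, σ.subtypeEquiv fun x => not_congr (hmem x))
  invFun := fun ⟨e₁, e₂⟩ => by
    refine ⟨(Equiv.sumCompl (· ∈ s)).symm.trans ((e₁.sumCongr e₂).trans
      (Equiv.sumCompl (· ∈ t))), ?_⟩
    apply Finset.Subset.antisymm
    · intro y hy
      obtain ⟨x, hx, rfl⟩ := Finset.mem_image.mp hy
      simp only [Equiv.trans_apply, Equiv.sumCompl_symm_apply_of_pos hx,
        Equiv.sumCongr_apply, Sum.map_inl, Equiv.sumCompl_apply_inl]
      exact (e₁ ⟨x, hx⟩).2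
    · intro y hy
      refine Finset.mem_image.mpr ⟨e₁.symm ⟨y, hy⟩, (e₁.symm ⟨y, hy⟩).2, ?_⟩
      simp only [Equiv.trans_apply,
        Equiv.sumCompl_symm_apply_of_pos (e₁.symm ⟨y, hy⟩).2,
        Equiv.sumCongr_apply, Sum.map_inl, Equiv.sumCompl_apply_inl, Subtype.coe_eta,
        Equiv.apply_symm_apply]
  left_inv := fun ⟨σ, hσ⟩ => by
    ext x
    simp only [Equiv.trans_apply]
    by_cases hx : x ∈ s
    · rw [Equiv.sumCompl_symm_apply_of_pos hx]; rfl
    · rw [Equiv.sumCompl_symm_apply_of_neg hx]; rfl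
  right_inv := fun ⟨e₁, e₂⟩ => by
    refine Prod.ext ?_ ?_ <;> ext x <;>
      simp only [Equiv.subtypeEquiv_apply, Equiv.trans_apply]
    · rw [Equiv.sumCompl_symm_apply_of_pos x.2]; rfl
    · rw [Equiv.sumCompl_symm_apply_of_neg x.2]; rfl

theorem card_perm_image_eq (s t : Finset α) (h : s.card = t.card) :
    (Finset.univ.filter fun σ : Equiv.Perm α => s.image σ = t).card
      = Nat.factorial s.card * Nat.factorial (Fintype.card α - s.card) := by
  rw [← Fintype.card_subtype]
  rw [Fintype.card_congr (permImageEquiv s t), Fintype.card_prod]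
  have e1 : {x // x ∈ s} ≃ {x // x ∈ t} :=
    Fintype.equivOfCardEq (by simp [Fintype.card_coe, h])
  have e2 : {x // x ∉ s} ≃ {x // x ∉ t} := by
    apply Fintype.equivOfCardEq
    have := Fintype.card_subtype_compl (· ∈ s)
    have := Fintype.card_subtype_compl (· ∈ t)
    simp only [Fintype.card_subtype_compl, Fintype.card_coe, h]
  rw [Fintype.card_equiv e1, Fintype.card_equiv e2, Fintype.card_coe,
    Fintype.card_subtype_compl, Fintype.card_coe]

theorem card_perm_image_le (s t : Finset α) :
    (Finset.univ.filter fun σ : Equiv.Perm α => s.image σ = t).card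
      ≤ Nat.factorial s.card * Nat.factorial (Fintype.card α - s.card) := by
  by_cases h : s.card = t.card
  · exact (card_perm_image_eq s t h).le
  · convert Nat.zero_le _
    rw [Finset.card_eq_zero, Finset.filter_eq_empty_iff]
    intro σ _ hσ
    exact h (by rw [← hσ, Finset.card_image_of_injective _ σ.injective])
def Iv (n a l : ℕ) : Finset (Fin n) :=
  Finset.univ.filter fun i : Fin n => a ≤ (i : ℕ) + 1 ∧ (i : ℕ) + 1 < a + l

lemma Iv_eq_attachFin {n a l : ℕ} (h1 : 1 ≤ a) (h2 : a + l ≤ n + 1) :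
    Iv n a l = Finset.attachFin (Finset.Ico (a-1) (a-1+l))
      (fun m hm => by rw [Finset.mem_Ico] at hm; omega) := by
  ext i; simp [Iv, Finset.mem_attachFin]; omega

lemma card_Iv {n a l : ℕ} (h1 : 1 ≤ a) (h2 : a + l ≤ n + 1) : (Iv n a l).card = l := by
  rw [Iv_eq_attachFin h1 h2, Finset.card_attachFin, Nat.card_Ico]; omega

lemma val_succ_inj {n : ℕ} : Function.Injective fun v : Fin n => (v : ℕ) + 1 :=
  fun u v h => Fin.ext (by simpa using h)

lemma image_Iv {n a l : ℕ} (h1 : 1 ≤ a) (h2 : a + l ≤ n + 1) :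
    (Iv n a l).image (fun v : Fin n => (v : ℕ) + 1) = Finset.Ico a (a + l) := by
  ext m
  simp only [Iv, Finset.mem_image, Finset.mem_filter, Finset.mem_univ, true_and,
    Finset.mem_Ico]
  constructor
  · rintro ⟨v, ⟨hv1, hv2⟩, rfl⟩; omega
  · rintro ⟨hm1, hm2⟩
    exact ⟨⟨m - 1, by omega⟩, by simp; omega⟩

lemma clusterAt_iff {n l k a : ℕ} (h1 : 1 ≤ k) (h2 : k + l ≤ n + 1) (σ : Equiv.Perm (Fin n)) :
    ClusterAt l k a σ ↔ (Iv n a l).image σ = Iv n k l := by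
  have : ClusterAt l k a σ ↔
      (Iv n a l).image (fun i => (σ i : ℕ) + 1) = Finset.Ico k (k + l) := Iff.rfl
  rw [this, ← image_Iv h1 h2]
  have hcomp : (Iv n a l).image (fun i => (σ i : ℕ) + 1)
      = ((Iv n a l).image σ).image (fun v : Fin n => (v : ℕ) + 1) := by
    rw [Finset.image_image]; rfl
  rw [hcomp]
  exact ⟨fun h => Finset.image_injective val_succ_inj h, fun h => by rw [h]⟩

lemma clusterAt_k_unique {n l k k' a : ℕ} (hl : 0 < l) {σ : Equiv.Perm (Fin n)}
    (h : ClusterAt l k a σ) (h' : ClusterAt l k' a σ) : k = k' := by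
  unfold ClusterAt at h h'
  rw [h] at h'
  have c1 : k ∈ Finset.Ico k' (k' + l) := by rw [← h']; simp [hl]
  have c2 : k' ∈ Finset.Ico k (k + l) := by rw [h']; simp [hl]
  simp [Finset.mem_Ico] at c1 c2; omega

lemma attachFin_union {n : ℕ} (s t : Finset ℕ) (hs : ∀ m ∈ s, m < n) (ht : ∀ m ∈ t, m < n) :
    Finset.attachFin s hs ∪ Finset.attachFin t ht
      = Finset.attachFin (s ∪ t) (fun m hm => (Finset.mem_union.mp hm).elim (hs m) (ht m)) := by
  ext i; simp [Finset.mem_attachFin, Finset.mem_union]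

lemma card_Ico_union (x y L : ℕ) (h : x ≤ y) :
    (Finset.Ico x (x + L) ∪ Finset.Ico y (y + L)).card = L + min (y - x) L := by
  have hc := Finset.card_union_add_card_inter (Finset.Ico x (x + L)) (Finset.Ico y (y + L))
  rw [Finset.Ico_inter_Ico, Nat.card_Ico, Nat.card_Ico, Nat.card_Ico] at hc
  omega

lemma card_Iv_union {n l a a' : ℕ} (h1 : 1 ≤ a) (h2 : a + l ≤ n + 1)
    (h1' : 1 ≤ a') (h2' : a' + l ≤ n + 1) :
    (Iv n a l ∪ Iv n a' l).card = l + min (max a a' - min a a') l := by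
  rw [Iv_eq_attachFin h1 h2, Iv_eq_attachFin h1' h2', attachFin_union, Finset.card_attachFin]
  rcases le_total a a' with h | h
  · rw [card_Ico_union _ _ _ (by omega : a - 1 ≤ a' - 1)]; omega
  · rw [Finset.union_comm, card_Ico_union _ _ _ (by omega : a' - 1 ≤ a - 1)]; omega

lemma bonferroni {ι α : Type*} [DecidableEq ι] [DecidableEq α] (I : Finset ι)
    (E : ι → Finset α) :
    ∑ i ∈ I, (E i).card ≤ (I.biUnion E).card
      + ∑ i ∈ I, ∑ j ∈ I.erase i, (E i ∩ E j).card := by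
  induction I using Finset.induction with
  | empty => simp
  | @insert j s hj ih =>
    rw [Finset.sum_insert hj, Finset.biUnion_insert]
    have hUI : (E j ∪ s.biUnion E).card + (E j ∩ s.biUnion E).card
        = (E j).card + (s.biUnion E).card := Finset.card_union_add_card_inter _ _
    have hIB : (E j ∩ s.biUnion E).card ≤ ∑ i ∈ s, (E j ∩ E i).card := by
      rw [Finset.inter_biUnion]
      exact Finset.card_biUnion_le
    have hD : ∑ i ∈ s, (E j ∩ E i).card + ∑ i ∈ s, ∑ j' ∈ s.erase i, (E i ∩ E j').card
        ≤ ∑ i ∈ insert j s, ∑ j' ∈ (insert j s).erase i, (E i ∩ E j').card := by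
      rw [Finset.sum_insert hj, Finset.erase_insert hj]
      exact add_le_add le_rfl (Finset.sum_le_sum fun i _ =>
        Finset.sum_le_sum_of_subset
          (Finset.erase_subset_erase _ (Finset.subset_insert _ _)))
    omega

/-- The count of pairs `(k', a')` near `(k, a)` with matching offsets. -/
lemma Q1_card_le (l k a m : ℕ) (hl : 1 ≤ l) :
    ((Finset.Icc 1 m ×ˢ Finset.Icc 1 m).filter fun q : ℕ × ℕ =>
        q.2 ≠ a ∧ max a q.2 - min a q.2 < l ∧
          max k q.1 - min k q.1 = max a q.2 - min a q.2).card ≤ 4 * l := by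
  have h : ((Finset.Icc 1 m ×ˢ Finset.Icc 1 m).filter fun q : ℕ × ℕ =>
        q.2 ≠ a ∧ max a q.2 - min a q.2 < l ∧
          max k q.1 - min k q.1 = max a q.2 - min a q.2).card
      ≤ (Finset.Ioo (a - l) (a + l) ×ˢ (Finset.univ : Finset Bool)).card :=
    Finset.card_le_card_of_injOn (fun q : ℕ × ℕ => (q.2, decide (k < q.1))) ?_ ?_
  · refine h.trans ?_
    rw [Finset.card_product, Nat.card_Ioo]
    simp only [Finset.card_univ, Fintype.card_bool]
    omega
  · rintro ⟨k', a'⟩ hq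
    simp only [Finset.mem_coe, Finset.mem_filter, Finset.mem_product, Finset.mem_Icc] at hq
    simp only [Finset.mem_coe, Finset.mem_product, Finset.mem_Ioo, Finset.mem_univ, and_true]
    omega
  · rintro ⟨k₁, a₁⟩ h₁ ⟨k₂, a₂⟩ h₂ heq
    simp only [Finset.mem_coe, Finset.mem_filter, Finset.mem_product, Finset.mem_Icc] at h₁ h₂
    simp only [Prod.mk.injEq] at heq
    obtain ⟨ha, hb⟩ := heq
    have hb' : (k < k₁) ↔ (k < k₂) := decide_eq_decide.mp hb
    have : k₁ = k₂ := by omega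
    simp [ha, this]

lemma sub_div_self_tendsto (c : ℝ) :
    Tendsto (fun n : ℕ => ((n : ℝ) - c) / n) atTop (nhds 1) := by
  have h : (fun n : ℕ => ((n : ℝ) - c) / n) =ᶠ[atTop] fun n => 1 - c * (1 / n) := by
    filter_upwards [eventually_gt_atTop 0] with n hn
    have : (n : ℝ) ≠ 0 := by positivity
    field_simp
  rw [tendsto_congr' h]
  have h0 := (tendsto_one_div_atTop_nhds_zero_nat).const_mul c
  simpa using tendsto_const_nhds.sub h0

lemma desc_div_pow_tendsto (m : ℕ) :
    Tendsto (fun n : ℕ => ((n.descFactorial m : ℕ) : ℝ) / (n : ℝ) ^ m) atTop (nhds 1) := by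
  have h1 : ∀ i ∈ Finset.range m,
      Tendsto (fun n : ℕ => ((n : ℝ) - i) / n) atTop (nhds 1) :=
    fun i _ => sub_div_self_tendsto i
  have h2 := tendsto_finset_prod (Finset.range m) fun i hi => h1 i hi
  have h3 : (fun n : ℕ => ((n.descFactorial m : ℕ) : ℝ) / (n : ℝ) ^ m)
      =ᶠ[atTop] fun n : ℕ => ∏ i ∈ Finset.range m, (((n : ℝ) - i) / n) := by
    filter_upwards [eventually_ge_atTop m] with n hn
    rw [Nat.descFactorial_eq_prod_range, Finset.prod_div_distrib, Finset.prod_const,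
      Finset.card_range, Nat.cast_prod]
    congr 1
    exact Finset.prod_congr rfl fun i hi =>
      Nat.cast_sub (le_of_lt (lt_of_lt_of_le (Finset.mem_range.mp hi) hn))
  rw [tendsto_congr' h3]
  simpa using h2

lemma pow_div_desc_tendsto (m : ℕ) :
    Tendsto (fun n : ℕ => (n : ℝ) ^ m / ((n.descFactorial m : ℕ) : ℝ)) atTop (nhds 1) := by
  have := (desc_div_pow_tendsto m).inv₀ one_ne_zero
  simp only [inv_div, inv_one] at this
  exact this

variable (l : ℕ)

def Efin (n : ℕ) (p : ℕ × ℕ) : Finset (Equiv.Perm (Fin n)) :=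
  Finset.univ.filter fun σ => ClusterAt l p.1 p.2 σ

def Ifin (n : ℕ) : Finset (ℕ × ℕ) := Finset.Icc 1 (n - l + 1) ×ˢ Finset.Icc 1 (n - l + 1)

lemma setA_eq (n : ℕ) :
    {σ : Equiv.Perm (Fin n) | ∃ k : ℕ, 1 ≤ k ∧ k ≤ n - l + 1 ∧ σ ∈ ClusterEvent n l k}
      = ↑((Ifin l n).biUnion (Efin l n)) := by
  ext σ
  simp only [Set.mem_setOf_eq, ClusterEvent, Finset.coe_biUnion, Set.mem_iUnion,
    Finset.mem_coe, Ifin, Efin, Finset.mem_product, Finset.mem_Icc, Finset.mem_filter,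
    Finset.mem_univ, true_and]
  constructor
  · rintro ⟨k, hk1, hk2, a, ha1, ha2, h⟩
    exact ⟨(k, a), ⟨⟨hk1, hk2⟩, ha1, ha2⟩, h⟩
  · rintro ⟨⟨k, a⟩, ⟨⟨hk1, hk2⟩, ha1, ha2⟩, h⟩
    exact ⟨k, hk1, hk2, a, ha1, ha2, h⟩

lemma Ifin_card (n : ℕ) : (Ifin l n).card = (n - l + 1) ^ 2 := by
  have h : (Finset.Icc 1 (n - l + 1)).card = n - l + 1 := by rw [Nat.card_Icc]; omega
  rw [Ifin, Finset.card_product, h, sq]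

lemma Efin_card {n : ℕ} (hln : l ≤ n) {p : ℕ × ℕ} (hp : p ∈ Ifin l n) :
    (Efin l n p).card = Nat.factorial l * Nat.factorial (n - l) := by
  obtain ⟨k, a⟩ := p
  simp only [Ifin, Finset.mem_product, Finset.mem_Icc] at hp
  obtain ⟨⟨hk1, hk2⟩, ha1, ha2⟩ := hp
  have hk2' : k + l ≤ n + 1 := by omega
  have ha2' : a + l ≤ n + 1 := by omega
  have hE : Efin l n (k, a)
      = Finset.univ.filter fun σ : Equiv.Perm (Fin n) => (Iv n a l).image σ = Iv n k l := by
    ext σ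
    simp only [Efin, Finset.mem_filter, Finset.mem_univ, true_and]
    exact clusterAt_iff hk1 hk2' σ
  rw [hE, card_perm_image_eq _ _ (by rw [card_Iv ha1 ha2', card_Iv hk1 hk2']),
    card_Iv ha1 ha2', Fintype.card_fin]

lemma pair_card_le {n l k a k' a' : ℕ} (hk1 : 1 ≤ k) (hk2 : k + l ≤ n + 1)
    (hk1' : 1 ≤ k') (hk2' : k' + l ≤ n + 1) :
    ((Efin l n (k, a)) ∩ (Efin l n (k', a'))).card
      ≤ Nat.factorial ((Iv n a l ∪ Iv n a' l).card)
        * Nat.factorial (n - (Iv n a l ∪ Iv n a' l).card) := by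
  have hsub : (Efin l n (k, a)) ∩ (Efin l n (k', a'))
      ⊆ Finset.univ.filter fun σ : Equiv.Perm (Fin n) =>
          (Iv n a l ∪ Iv n a' l).image σ = Iv n k l ∪ Iv n k' l := by
    intro σ hσ
    simp only [Efin, Finset.mem_inter, Finset.mem_filter, Finset.mem_univ, true_and] at hσ ⊢
    obtain ⟨h1, h2⟩ := hσ
    rw [clusterAt_iff hk1 hk2 σ] at h1
    rw [clusterAt_iff hk1' hk2' σ] at h2
    rw [Finset.image_union, h1, h2]
  exact (Finset.card_le_card hsub).trans
    ((card_perm_image_le _ _).trans_eq (by rw [Fintype.card_fin]))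

lemma pairsum_le {n : ℕ} (hl : 1 ≤ l) (hn : 3 * l ≤ n) {p : ℕ × ℕ} (hp : p ∈ Ifin l n) :
    ∑ q ∈ (Ifin l n).erase p, ((Efin l n p) ∩ (Efin l n q)).card
      ≤ 4 * l * (Nat.factorial (2 * l) * Nat.factorial (n - (l + 1)))
        + (n - l + 1) ^ 2 * (Nat.factorial (2 * l) * Nat.factorial (n - 2 * l)) := by
  classical
  obtain ⟨k, a⟩ := p
  simp only [Ifin, Finset.mem_product, Finset.mem_Icc] at hp
  obtain ⟨⟨hk1, hk2⟩, ha1, ha2⟩ := hp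
  have hk2' : k + l ≤ n + 1 := by omega
  have ha2' : a + l ≤ n + 1 := by omega
  set Q1 := (Ifin l n).filter (fun q : ℕ × ℕ => q.2 ≠ a ∧ max a q.2 - min a q.2 < l ∧
      max k q.1 - min k q.1 = max a q.2 - min a q.2) with hQ1def
  set Q2 := (Ifin l n).filter (fun q : ℕ × ℕ => l ≤ max a q.2 - min a q.2) with hQ2def
  -- validity of members of Ifin
  have hvalid : ∀ q : ℕ × ℕ, q ∈ Ifin l n →
      (1 ≤ q.1 ∧ q.1 + l ≤ n + 1 ∧ 1 ≤ q.2 ∧ q.2 + l ≤ n + 1) := by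
    rintro ⟨k', a'⟩ hq
    simp only [Ifin, Finset.mem_product, Finset.mem_Icc] at hq
    refine ⟨hq.1.1, by omega, hq.2.1, by omega⟩
  -- coverage
  have hcov : ∀ q ∈ (Ifin l n).erase (k, a),
      ((Efin l n (k, a)) ∩ (Efin l n q)).card ≠ 0 → q ∈ Q1 ∪ Q2 := by
    rintro ⟨k', a'⟩ hq hne
    have hqI : (k', a') ∈ Ifin l n := Finset.mem_of_mem_erase hq
    have hqne : (k', a') ≠ (k, a) := Finset.ne_of_mem_erase hq
    obtain ⟨hk1'', hk2'', ha1'', ha2''⟩ := hvalid _ hqI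
    obtain ⟨σ, hσ⟩ := Finset.card_ne_zero.mp hne
    simp only [Efin, Finset.mem_inter, Finset.mem_filter, Finset.mem_univ, true_and] at hσ
    obtain ⟨h1, h2⟩ := hσ
    by_cases haa : a' = a
    · exfalso
      subst haa
      exact hqne (by rw [clusterAt_k_unique (by omega) h2 h1])
    · rw [Finset.mem_union]
      by_cases hd : l ≤ max a a' - min a a'
      · exact Or.inr (Finset.mem_filter.mpr ⟨hqI, hd⟩)
      · refine Or.inl (Finset.mem_filter.mpr ⟨hqI, haa, by omega, ?_⟩)
        have himg : (Iv n a l ∪ Iv n a' l).image σ = Iv n k l ∪ Iv n k' l := by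
          rw [Finset.image_union, (clusterAt_iff hk1 hk2' σ).mp h1,
            (clusterAt_iff hk1'' hk2'' σ).mp h2]
        have hcard : (Iv n a l ∪ Iv n a' l).card = (Iv n k l ∪ Iv n k' l).card := by
          rw [← himg, Finset.card_image_of_injective _ σ.injective]
        rw [card_Iv_union ha1 ha2' ha1'' ha2'',
          card_Iv_union hk1 hk2' hk1'' hk2''] at hcard
        omega
  -- pointwise bounds
  have hb1 : ∀ q ∈ Q1, ((Efin l n (k, a)) ∩ (Efin l n q)).card
      ≤ Nat.factorial (2 * l) * Nat.factorial (n - (l + 1)) := by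
    rintro ⟨k', a'⟩ hq
    rw [hQ1def, Finset.mem_filter] at hq
    obtain ⟨hqI, haa, hda, hdk⟩ := hq
    obtain ⟨hk1'', hk2'', ha1'', ha2''⟩ := hvalid _ hqI
    refine (pair_card_le hk1 hk2' hk1'' hk2'').trans ?_
    rw [card_Iv_union ha1 ha2' ha1'' ha2'']
    exact Nat.mul_le_mul (Nat.factorial_le (by omega)) (Nat.factorial_le (by omega))
  have hb2 : ∀ q ∈ Q2, ((Efin l n (k, a)) ∩ (Efin l n q)).card
      ≤ Nat.factorial (2 * l) * Nat.factorial (n - 2 * l) := by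
    rintro ⟨k', a'⟩ hq
    rw [hQ2def, Finset.mem_filter] at hq
    obtain ⟨hqI, hd⟩ := hq
    obtain ⟨hk1'', hk2'', ha1'', ha2''⟩ := hvalid _ hqI
    refine (pair_card_le hk1 hk2' hk1'' hk2'').trans ?_
    rw [card_Iv_union ha1 ha2' ha1'' ha2'']
    exact Nat.mul_le_mul (Nat.factorial_le (by omega)) (Nat.factorial_le (by omega))
  -- assemble
  have hstep1 : ∑ q ∈ (Ifin l n).erase (k, a), ((Efin l n (k, a)) ∩ (Efin l n q)).card
      = ∑ q ∈ ((Ifin l n).erase (k, a)).filter (· ∈ Q1 ∪ Q2),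
          ((Efin l n (k, a)) ∩ (Efin l n q)).card :=
    (Finset.sum_filter_of_ne hcov).symm
  have hstep2 : ∑ q ∈ ((Ifin l n).erase (k, a)).filter (· ∈ Q1 ∪ Q2),
        ((Efin l n (k, a)) ∩ (Efin l n q)).card
      ≤ ∑ q ∈ Q1 ∪ Q2, ((Efin l n (k, a)) ∩ (Efin l n q)).card :=
    Finset.sum_le_sum_of_subset (fun x hx => (Finset.mem_filter.mp hx).2)
  have hstep3 : ∑ q ∈ Q1 ∪ Q2, ((Efin l n (k, a)) ∩ (Efin l n q)).card
      ≤ ∑ q ∈ Q1, ((Efin l n (k, a)) ∩ (Efin l n q)).card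
        + ∑ q ∈ Q2, ((Efin l n (k, a)) ∩ (Efin l n q)).card := by
    have := Finset.sum_union_inter (s₁ := Q1) (s₂ := Q2)
      (f := fun q => ((Efin l n (k, a)) ∩ (Efin l n q)).card)
    omega
  have hs1 : ∑ q ∈ Q1, ((Efin l n (k, a)) ∩ (Efin l n q)).card
      ≤ 4 * l * (Nat.factorial (2 * l) * Nat.factorial (n - (l + 1))) := by
    refine (Finset.sum_le_card_nsmul _ _ _ hb1).trans ?_
    rw [smul_eq_mul]
    exact Nat.mul_le_mul_right _ (Q1_card_le l k a (n - l + 1) hl)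
  have hs2 : ∑ q ∈ Q2, ((Efin l n (k, a)) ∩ (Efin l n q)).card
      ≤ (n - l + 1) ^ 2 * (Nat.factorial (2 * l) * Nat.factorial (n - 2 * l)) := by
    refine (Finset.sum_le_card_nsmul _ _ _ hb2).trans ?_
    rw [smul_eq_mul]
    refine Nat.mul_le_mul_right _ ?_
    calc Q2.card ≤ (Ifin l n).card := Finset.card_le_card (Finset.filter_subset _ _)
      _ = (n - l + 1) ^ 2 := Ifin_card l n
  omega

lemma sum_Efin_card {n : ℕ} (hln : l ≤ n) :
    ∑ p ∈ Ifin l n, (Efin l n p).card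
      = (n - l + 1) ^ 2 * (Nat.factorial l * Nat.factorial (n - l)) := by
  calc ∑ p ∈ Ifin l n, (Efin l n p).card
      = ∑ _p ∈ Ifin l n, Nat.factorial l * Nat.factorial (n - l) :=
        Finset.sum_congr rfl fun p hp => Efin_card l hln hp
    _ = _ := by rw [Finset.sum_const, smul_eq_mul, Ifin_card]

lemma N_le_M {n : ℕ} (hln : l ≤ n) :
    ((Ifin l n).biUnion (Efin l n)).card
      ≤ (n - l + 1) ^ 2 * (Nat.factorial l * Nat.factorial (n - l)) :=
  Finset.card_biUnion_le.trans (le_of_eq (sum_Efin_card l hln))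

lemma M_le_N_add {n : ℕ} (hl : 1 ≤ l) (hn : 3 * l ≤ n) :
    (n - l + 1) ^ 2 * (Nat.factorial l * Nat.factorial (n - l))
      ≤ ((Ifin l n).biUnion (Efin l n)).card
        + (n - l + 1) ^ 2 * (4 * l * (Nat.factorial (2 * l) * Nat.factorial (n - (l + 1)))
            + (n - l + 1) ^ 2 * (Nat.factorial (2 * l) * Nat.factorial (n - 2 * l))) := by
  have h1 := bonferroni (Ifin l n) (Efin l n)
  rw [sum_Efin_card l (by omega)] at h1
  have h3 : ∑ p ∈ Ifin l n, ∑ q ∈ (Ifin l n).erase p, ((Efin l n p) ∩ (Efin l n q)).card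
      ≤ (n - l + 1) ^ 2 * (4 * l * (Nat.factorial (2 * l) * Nat.factorial (n - (l + 1)))
          + (n - l + 1) ^ 2 * (Nat.factorial (2 * l) * Nat.factorial (n - 2 * l))) := by
    refine (Finset.sum_le_card_nsmul _ _ _ fun p hp => pairsum_le l hl hn hp).trans ?_
    rw [smul_eq_mul, Ifin_card]
  omega

def Nnat (l n : ℕ) : ℕ := ((Ifin l n).biUnion (Efin l n)).card

def Mnat (l n : ℕ) : ℕ := (n - l + 1) ^ 2 * (Nat.factorial l * Nat.factorial (n - l))

def Bnat (l n : ℕ) : ℕ :=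
  4 * l * Nat.factorial (2 * l) * n ^ 2 * Nat.factorial (n - (l + 1))
    + Nat.factorial (2 * l) * n ^ 4 * Nat.factorial (n - 2 * l)

lemma Nnat_le_Mnat {l n : ℕ} (hln : l ≤ n) : Nnat l n ≤ Mnat l n := N_le_M l hln

lemma Mnat_le_Nnat_add {l n : ℕ} (hl : 1 ≤ l) (hn : 3 * l ≤ n) :
    Mnat l n ≤ Nnat l n + Bnat l n := by
  refine (M_le_N_add l hl hn).trans (Nat.add_le_add_left ?_ _)
  have hu : n - l + 1 ≤ n := by omega
  set A := 4 * l * (Nat.factorial (2 * l) * Nat.factorial (n - (l + 1))) with hA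
  set B := Nat.factorial (2 * l) * Nat.factorial (n - 2 * l) with hB
  calc (n - l + 1) ^ 2 * (A + (n - l + 1) ^ 2 * B)
      = (n - l + 1) ^ 2 * A + (n - l + 1) ^ 2 * (n - l + 1) ^ 2 * B := by ring
    _ ≤ n ^ 2 * A + n ^ 2 * n ^ 2 * B := by gcongr <;> omega
    _ = Bnat l n := by rw [hA, hB, Bnat]; ring

lemma tendsto_main (j : ℕ) :
    Filter.Tendsto (fun n : ℕ => (n : ℝ) ^ j * (Mnat (j + 2) n : ℝ) / (Nat.factorial n : ℝ))
      Filter.atTop (nhds (Nat.factorial (j + 2) : ℝ)) := by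
  have hev : (fun n : ℕ => (n : ℝ) ^ j * (Mnat (j + 2) n : ℝ) / (Nat.factorial n : ℝ))
      =ᶠ[Filter.atTop] fun n : ℕ => (Nat.factorial (j + 2) : ℝ)
        * (((n : ℝ) - (j + 1)) / n) ^ 2
        * ((n : ℝ) ^ (j + 2) / ((n.descFactorial (j + 2) : ℕ) : ℝ)) := by
    filter_upwards [Filter.eventually_ge_atTop (3 * (j + 2))] with n hn
    have hle : j + 2 ≤ n := by omega
    have hfac : (Nat.factorial n : ℝ)
        = (Nat.factorial (n - (j + 2)) : ℝ) * ((n.descFactorial (j + 2) : ℕ) : ℝ) := by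
      exact_mod_cast (Nat.factorial_mul_descFactorial hle).symm
    have hdesc : ((n.descFactorial (j + 2) : ℕ) : ℝ) ≠ 0 := by
      have : n.descFactorial (j + 2) ≠ 0 := fun h =>
        absurd (Nat.descFactorial_eq_zero_iff_lt.mp h) (by omega)
      exact_mod_cast this
    have hfpos : (Nat.factorial (n - (j + 2)) : ℝ) ≠ 0 := by
      exact_mod_cast (Nat.factorial_ne_zero _)
    have hnpos : (n : ℝ) ≠ 0 := by
      have : 0 < n := by omega
      exact_mod_cast this.ne'
    have hM : ((Mnat (j + 2) n : ℕ) : ℝ)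
        = ((n : ℝ) - (j + 1)) ^ 2
          * ((Nat.factorial (j + 2) : ℝ) * (Nat.factorial (n - (j + 2)) : ℝ)) := by
      rw [Mnat]
      push_cast [Nat.cast_sub hle]
      ring
    rw [hM, hfac, show (n : ℝ) ^ (j + 2) = (n : ℝ) ^ j * (n : ℝ) ^ 2 from pow_add _ j 2]
    set D := ((n.descFactorial (j + 2) : ℕ) : ℝ) with hD
    set F := (Nat.factorial (n - (j + 2)) : ℝ) with hF
    field_simp
  rw [Filter.tendsto_congr' hev]
  have h1 := (sub_div_self_tendsto ((j : ℝ) + 1)).pow 2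
  have h2 := pow_div_desc_tendsto (j + 2)
  have := (tendsto_const_nhds (x := (Nat.factorial (j + 2) : ℝ))
    (f := Filter.atTop (α := ℕ))).mul h1 |>.mul h2
  simpa using this

lemma tendsto_err (j : ℕ) (hj : 1 ≤ j) :
    Filter.Tendsto (fun n : ℕ => (n : ℝ) ^ j * (Bnat (j + 2) n : ℝ) / (Nat.factorial n : ℝ))
      Filter.atTop (nhds 0) := by
  have hsplit : (fun n : ℕ => (n : ℝ) ^ j * (Bnat (j + 2) n : ℝ) / (Nat.factorial n : ℝ))
      = fun n : ℕ =>
        (n : ℝ) ^ j * (4 * (j + 2) * Nat.factorial (2 * (j + 2)) * n ^ 2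
            * Nat.factorial (n - (j + 3)) : ℕ) / (Nat.factorial n : ℝ)
        + (n : ℝ) ^ j * (Nat.factorial (2 * (j + 2)) * n ^ 4
            * Nat.factorial (n - 2 * (j + 2)) : ℕ) / (Nat.factorial n : ℝ) := by
    funext n
    rw [Bnat]
    have : j + 2 + 1 = j + 3 := rfl
    rw [this]
    push_cast
    ring
  rw [hsplit]
  have ht1 : Filter.Tendsto (fun n : ℕ =>
      (n : ℝ) ^ j * (4 * (j + 2) * Nat.factorial (2 * (j + 2)) * n ^ 2
        * Nat.factorial (n - (j + 3)) : ℕ) / (Nat.factorial n : ℝ))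
      Filter.atTop (nhds 0) := by
    have hev : (fun n : ℕ =>
        (n : ℝ) ^ j * (4 * (j + 2) * Nat.factorial (2 * (j + 2)) * n ^ 2
          * Nat.factorial (n - (j + 3)) : ℕ) / (Nat.factorial n : ℝ))
        =ᶠ[Filter.atTop] fun n : ℕ =>
          (4 * ((j : ℝ) + 2) * Nat.factorial (2 * (j + 2))) * (1 / n)
            * ((n : ℝ) ^ (j + 3) / ((n.descFactorial (j + 3) : ℕ) : ℝ)) := by
      filter_upwards [Filter.eventually_ge_atTop (3 * (j + 2))] with n hn
      have hle : j + 3 ≤ n := by omega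
      have hfac : (Nat.factorial n : ℝ)
          = (Nat.factorial (n - (j + 3)) : ℝ) * ((n.descFactorial (j + 3) : ℕ) : ℝ) := by
        exact_mod_cast (Nat.factorial_mul_descFactorial hle).symm
      have hdesc : ((n.descFactorial (j + 3) : ℕ) : ℝ) ≠ 0 := by
        have : n.descFactorial (j + 3) ≠ 0 := fun h =>
          absurd (Nat.descFactorial_eq_zero_iff_lt.mp h) (by omega)
        exact_mod_cast this
      have hfpos : (Nat.factorial (n - (j + 3)) : ℝ) ≠ 0 := by
        exact_mod_cast (Nat.factorial_ne_zero _)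
      have hnpos : (n : ℝ) ≠ 0 := by
        have : 0 < n := by omega
        exact_mod_cast this.ne'
      have hX : ((4 * (j + 2) * Nat.factorial (2 * (j + 2)) * n ^ 2
            * Nat.factorial (n - (j + 3)) : ℕ) : ℝ)
          = 4 * ((j : ℝ) + 2) * (Nat.factorial (2 * (j + 2)) : ℝ) * (n : ℝ) ^ 2
            * (Nat.factorial (n - (j + 3)) : ℝ) := by
        push_cast
        ring
      rw [hX, hfac, show (n : ℝ) ^ (j + 3) = (n : ℝ) ^ j * (n : ℝ) ^ 3 from pow_add _ j 3]
      set D := ((n.descFactorial (j + 3) : ℕ) : ℝ) with hD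
      set F := (Nat.factorial (n - (j + 3)) : ℝ) with hF
      field_simp
    rw [Filter.tendsto_congr' hev]
    have h1 := tendsto_one_div_atTop_nhds_zero_nat (𝕜 := ℝ)
    have h2 := pow_div_desc_tendsto (j + 3)
    have := (tendsto_const_nhds
      (x := (4 * ((j : ℝ) + 2) * Nat.factorial (2 * (j + 2))))
      (f := Filter.atTop (α := ℕ))).mul h1 |>.mul h2
    simpa using this
  have ht2 : Filter.Tendsto (fun n : ℕ =>
      (n : ℝ) ^ j * (Nat.factorial (2 * (j + 2)) * n ^ 4
        * Nat.factorial (n - 2 * (j + 2)) : ℕ) / (Nat.factorial n : ℝ))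
      Filter.atTop (nhds 0) := by
    have hev : (fun n : ℕ =>
        (n : ℝ) ^ j * (Nat.factorial (2 * (j + 2)) * n ^ 4
          * Nat.factorial (n - 2 * (j + 2)) : ℕ) / (Nat.factorial n : ℝ))
        =ᶠ[Filter.atTop] fun n : ℕ =>
          (Nat.factorial (2 * (j + 2)) : ℝ) * (1 / n) ^ j
            * ((n : ℝ) ^ (2 * (j + 2)) / ((n.descFactorial (2 * (j + 2)) : ℕ) : ℝ)) := by
      filter_upwards [Filter.eventually_ge_atTop (3 * (j + 2))] with n hn
      have hle : 2 * (j + 2) ≤ n := by omega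
      have hfac : (Nat.factorial n : ℝ)
          = (Nat.factorial (n - 2 * (j + 2)) : ℝ)
            * ((n.descFactorial (2 * (j + 2)) : ℕ) : ℝ) := by
        exact_mod_cast (Nat.factorial_mul_descFactorial hle).symm
      have hdesc : ((n.descFactorial (2 * (j + 2)) : ℕ) : ℝ) ≠ 0 := by
        have : n.descFactorial (2 * (j + 2)) ≠ 0 := fun h =>
          absurd (Nat.descFactorial_eq_zero_iff_lt.mp h) (by omega)
        exact_mod_cast this
      have hfpos : (Nat.factorial (n - 2 * (j + 2)) : ℝ) ≠ 0 := by
        exact_mod_cast (Nat.factorial_ne_zero _)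
      have hnpos : (n : ℝ) ≠ 0 := by
        have : 0 < n := by omega
        exact_mod_cast this.ne'
      have hX : ((Nat.factorial (2 * (j + 2)) * n ^ 4
            * Nat.factorial (n - 2 * (j + 2)) : ℕ) : ℝ)
          = (Nat.factorial (2 * (j + 2)) : ℝ) * (n : ℝ) ^ 4
            * (Nat.factorial (n - 2 * (j + 2)) : ℝ) := by
        push_cast
        ring
      rw [hX, hfac, div_pow, one_pow,
        show (n : ℝ) ^ (2 * (j + 2)) = (n : ℝ) ^ (j + 4) * (n : ℝ) ^ j by
          rw [← pow_add]; congr 1; ring,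
        show (n : ℝ) ^ (j + 4) = (n : ℝ) ^ j * (n : ℝ) ^ 4 from pow_add _ j 4]
      have hpj : (n : ℝ) ^ j ≠ 0 := pow_ne_zero _ hnpos
      set D := ((n.descFactorial (2 * (j + 2)) : ℕ) : ℝ) with hD
      set F := (Nat.factorial (n - 2 * (j + 2)) : ℝ) with hF
      field_simp
    rw [Filter.tendsto_congr' hev]
    have h1 := (tendsto_one_div_atTop_nhds_zero_nat (𝕜 := ℝ)).pow j
    have h2 := pow_div_desc_tendsto (2 * (j + 2))
    have := (tendsto_const_nhds (x := (Nat.factorial (2 * (j + 2)) : ℝ))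
      (f := Filter.atTop (α := ℕ))).mul h1 |>.mul h2
    have hz : (0 : ℝ) ^ j = 0 := zero_pow (by omega)
    simpa [hz] using this
  simpa using ht1.add ht2

end Aux

/-- `P_n(A^{(n)}_l) ∼ l!/n^{l-2}` as `n → ∞`, for fixed `l ≥ 3`. -/
theorem uniform_total_cluster_asymptotics (l : ℕ) (hl : 3 ≤ l) :
    Filter.Tendsto
      (fun n : ℕ => (n : ℝ) ^ (l - 2) *
        ({σ : Equiv.Perm (Fin n) |
            ∃ k : ℕ, 1 ≤ k ∧ k ≤ n - l + 1 ∧ σ ∈ ClusterEvent n l k}.ncard : ℝ) /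
        (Nat.factorial n : ℝ))
      Filter.atTop (nhds (Nat.factorial l : ℝ)) := by
  obtain ⟨j, rfl⟩ : ∃ j, l = j + 2 := ⟨l - 2, by omega⟩
  have hj : 1 ≤ j := by omega
  have hfun : (fun n : ℕ => (n : ℝ) ^ (j + 2 - 2) *
        ({σ : Equiv.Perm (Fin n) |
            ∃ k : ℕ, 1 ≤ k ∧ k ≤ n - (j + 2) + 1 ∧ σ ∈ ClusterEvent n (j + 2) k}.ncard : ℝ) /
        (Nat.factorial n : ℝ))
      = fun n : ℕ => (n : ℝ) ^ j * (Nnat (j + 2) n : ℝ) / (Nat.factorial n : ℝ) := by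
    funext n
    rw [setA_eq (j + 2) n, Set.ncard_coe_finset]
    rfl
  rw [hfun]
  have hm := tendsto_main j
  have he := tendsto_err j hj
  have hlow := hm.sub he
  rw [sub_zero] at hlow
  refine tendsto_of_tendsto_of_tendsto_of_le_of_le' hlow hm ?_ ?_
  · filter_upwards [Filter.eventually_ge_atTop (3 * (j + 2))] with n hn
    have hfp : (0 : ℝ) < (Nat.factorial n : ℝ) := by exact_mod_cast Nat.factorial_pos n
    have hineq : (Mnat (j + 2) n : ℝ) ≤ (Nnat (j + 2) n : ℝ) + (Bnat (j + 2) n : ℝ) := by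
      exact_mod_cast Mnat_le_Nnat_add (by omega) hn
    rw [sub_le_iff_le_add, ← add_div]
    have h2 : (n : ℝ) ^ j * (Mnat (j + 2) n : ℝ)
        ≤ (n : ℝ) ^ j * (Nnat (j + 2) n : ℝ) + (n : ℝ) ^ j * (Bnat (j + 2) n : ℝ) := by
      have := mul_le_mul_of_nonneg_left hineq
        (pow_nonneg (Nat.cast_nonneg n) j)
      rw [mul_add] at this
      exact this
    exact div_le_div_of_nonneg_right h2 hfp.le
  · filter_upwards [Filter.eventually_ge_atTop (3 * (j + 2))] with n hn
    have hfp : (0 : ℝ) < (Nat.factorial n : ℝ) := by exact_mod_cast Nat.factorial_pos n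
    have hineq : (Nnat (j + 2) n : ℝ) ≤ (Mnat (j + 2) n : ℝ) := by
      exact_mod_cast Nnat_le_Mnat (show j + 2 ≤ n by omega)
    exact div_le_div_of_nonneg_right
      (mul_le_mul_of_nonneg_left hineq (pow_nonneg (Nat.cast_nonneg n) j)) hfp.le
end

section
/- Let m ≥ 2 and τ ∈ S_m. For all n ≥ 3, all l with 2 ≤ l ≤ n-1, and all k with 1 ≤ k ≤ n-l+1, one has |A^{(n)}_{l;k} ∩ S_n(τ)| ≤ |S_{n-l+1}(τ)| · |S_l(τ)|; equivalently, under the uniform probability measure P_n^{av(τ)} on S_n(τ), P_n^{av(τ)}(A^{(n)}_{l;k}) ≤ |S_{n-l+1}(τ)|·|S_l(τ)| / |S_n(τ)|. -/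
open Filter

/-!
If the positions `[A, A + l)` of `σ` carry the values `[K, K + l)`, then `σ` is the inflation of
a permutation `π` of size `n - l + 1` at its entry `π A = K` by a permutation `β` of size `l`.
Both `π` and `β` are patterns of `σ`, so they avoid `τ` whenever `σ` does, and `σ` is recovered
from the pair `(π, β)` because `A` is the position of `K` in `π`. Hence `σ ↦ (π, β)` embeds
`A_{l;k} ∩ S_n(τ)` into `S_{n-l+1}(τ) × S_l(τ)`.
-/

open Equiv

theorem Set.ncard_le_ncard_of_exists_of_leftUnique {α β : Type*} [Finite β] {s : Set α}
    {t : Set β} {R : α → β → Prop} (hs : ∀ a ∈ s, ∃ b ∈ t, R a b) (hR : Relator.LeftUnique R) :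
    s.ncard ≤ t.ncard := by
  choose f hft hfR using hs
  rw [← Nat.card_coe_set_eq, ← Nat.card_coe_set_eq]
  exact Nat.card_le_card_of_injective (fun a : s => (⟨f a a.2, hft a a.2⟩ : t))
    fun a b hab => Subtype.ext <| hR (hfR a a.2) <| by
      rw [show f a a.2 = f b b.2 from congrArg Subtype.val hab]; exact hfR b b.2

section Patterns

variable {n p m : ℕ}

theorem Contains.trans {σ : Fin n → Fin n} {ρ : Fin p → Fin p} {τ : Fin m → Fin m}
    (hσρ : Contains σ ρ) (hρτ : Contains ρ τ) : Contains σ τ := by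
  obtain ⟨f, hf, hσf⟩ := hσρ
  obtain ⟨g, hg, hρg⟩ := hρτ
  exact ⟨f ∘ g, hf.comp hg, fun j k => (hσf (g j) (g k)).trans (hρg j k)⟩

theorem Avoids.of_contains {σ : Fin n → Fin n} {ρ : Fin p → Fin p} {τ : Fin m → Fin m}
    (hσ : Avoids σ τ) (hσρ : Contains σ ρ) : Avoids ρ τ :=
  fun hρ => hσ (hσρ.trans hρ)

theorem exists_perm_contains_of_lt_iff (σ : Perm (Fin n)) {f : Fin p → Fin n}
    (hf : StrictMono f) (g : Fin p → Fin p) (hg : ∀ j k, σ (f j) < σ (f k) ↔ g j < g k) :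
    ∃ ρ : Perm (Fin p), ⇑ρ = g ∧ Contains σ ρ := by
  have hg_inj : Function.Injective g := fun j k hjk =>
    hf.injective <| σ.injective <| le_antisymm
      (not_lt.1 fun h => (hg k j).1 h |>.ne hjk.symm)
      (not_lt.1 fun h => (hg j k).1 h |>.ne hjk)
  exact ⟨Equiv.ofBijective g (Finite.injective_iff_bijective.1 hg_inj), rfl, f, hf, hg⟩

end Patterns

section Inflation

def collapseBlock (l K w : ℕ) : ℕ :=
  if w < K then w else if w < K + l then K else w - (l - 1)

def skipBlock (l A j : ℕ) : ℕ :=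
  if j ≤ A then j else j + (l - 1)

variable {l A K : ℕ}

theorem collapseBlock_eq_iff (hl : 1 ≤ l) {w : ℕ} :
    collapseBlock l K w = K ↔ K ≤ w ∧ w < K + l := by
  unfold collapseBlock; split_ifs <;> omega

theorem collapseBlock_lt_collapseBlock_iff {w₁ w₂ : ℕ}
    (h : ¬(K ≤ w₁ ∧ w₁ < K + l) ∨ ¬(K ≤ w₂ ∧ w₂ < K + l)) :
    collapseBlock l K w₁ < collapseBlock l K w₂ ↔ w₁ < w₂ := by
  unfold collapseBlock; split_ifs <;> omega

theorem skipBlock_strictMono : StrictMono (skipBlock l A) := by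
  intro j₁ j₂ h; unfold skipBlock; split_ifs <;> omega

theorem skipBlock_mem_iff (hl : 1 ≤ l) {j : ℕ} :
    A ≤ skipBlock l A j ∧ skipBlock l A j < A + l ↔ j = A := by
  unfold skipBlock; split_ifs <;> omega

theorem collapseBlock_inj {w₁ w₂ : ℕ} (h : ¬(K ≤ w₂ ∧ w₂ < K + l)) :
    collapseBlock l K w₁ = collapseBlock l K w₂ ↔ w₁ = w₂ := by
  unfold collapseBlock; split_ifs <;> omega

theorem skipBlock_lt {n r j : ℕ} (hl : 1 ≤ l) (hrl : r + l = n + 1) (hj : j < r) :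
    skipBlock l A j < n := by
  unfold skipBlock; split_ifs <;> omega

theorem exists_skipBlock_eq {n r i : ℕ} (hrl : r + l = n + 1) (hA : A < r) (hi : i < n)
    (hiA : ¬(A < i ∧ i < A + l)) : ∃ j < r, skipBlock l A j = i := by
  by_cases hiA' : i ≤ A
  · exact ⟨i, by omega, if_pos hiA'⟩
  · exact ⟨i - (l - 1), by omega, by unfold skipBlock; split_ifs <;> omega⟩

variable {n r : ℕ}

def IsBlock (σ : Perm (Fin n)) (l A K : ℕ) : Prop :=
  ∀ i : Fin n, (A ≤ i ∧ (i : ℕ) < A + l) ↔ (K ≤ σ i ∧ (σ i : ℕ) < K + l)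

theorem ClusterAt.isBlock {k a : ℕ} {σ : Perm (Fin n)} (ha : 1 ≤ a) (hk : 1 ≤ k)
    (h : ClusterAt l k a σ) : IsBlock σ l (a - 1) (k - 1) := by
  intro i
  have hmem := congrArg (fun s => (σ i : ℕ) + 1 ∈ s) h
  simp only [Finset.mem_image, Finset.mem_filter, Finset.mem_univ, true_and, add_left_inj,
    Fin.val_inj, EmbeddingLike.apply_eq_iff_eq, exists_eq_right, Finset.mem_Ico, eq_iff_iff] at hmem
  omega

/-- `σ` arises from `π` by inflating its entry `π A = K` into a block with pattern `β`, occupying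
positions `[A, A + l)` and values `[K, K + l)` of `σ` (all indices 0-based). -/
structure IsInflationAt (σ : Perm (Fin n)) (A K : ℕ) (π : Perm (Fin r)) (β : Perm (Fin l)) :
    Prop where
  add_le : A + l ≤ n
  isBlock : IsBlock σ l A K
  collapse : ∀ (j : Fin r) (i : Fin n), (i : ℕ) = skipBlock l A j →
    (π j : ℕ) = collapseBlock l K (σ i)
  block : ∀ (t : Fin l) (i : Fin n), (i : ℕ) = A + t → (σ i : ℕ) = K + β t

variable {σ : Perm (Fin n)}

theorem IsBlock.exists_block_pattern (hσ : IsBlock σ l A K) (hA : A + l ≤ n) :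
    ∃ β : Perm (Fin l), (∀ (t : Fin l) (i : Fin n), (i : ℕ) = A + t → (σ i : ℕ) = K + β t) ∧
      Contains σ β := by
  have hσK (t : Fin l) : K ≤ σ ⟨A + t, by omega⟩ ∧ (σ ⟨A + t, by omega⟩ : ℕ) < K + l :=
    (hσ _).1 ⟨by simp, by simp⟩
  obtain ⟨β, hβ, hσβ⟩ :=
    exists_perm_contains_of_lt_iff σ (f := fun t : Fin l => ⟨A + t, by omega⟩)
    (fun t₁ t₂ h => Fin.mk_lt_mk.2 (Nat.add_lt_add_left h A))
    (fun t => ⟨σ ⟨A + t, by omega⟩ - K, by have := hσK t; omega⟩)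
    (fun t₁ t₂ => by have := hσK t₁; have := hσK t₂; simp only [Fin.lt_def]; omega)
  refine ⟨β, fun t i hi => ?_, hσβ⟩
  have := hσK t
  rw [show i = ⟨A + t, by omega⟩ from Fin.ext hi, hβ]
  simp only; omega

theorem IsBlock.exists_collapse_pattern (hσ : IsBlock σ l A K) (hl : 1 ≤ l)
    (hrl : r + l = n + 1) (hK : K + l ≤ n) :
    ∃ π : Perm (Fin r), (∀ (j : Fin r) (i : Fin n), (i : ℕ) = skipBlock l A j →
      (π j : ℕ) = collapseBlock l K (σ i)) ∧ Contains σ π := by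
  have hval (w : Fin n) : collapseBlock l K w < r := by
    have := w.isLt; unfold collapseBlock; split_ifs <;> omega
  set f : Fin r → Fin n := fun j => ⟨skipBlock l A j, skipBlock_lt hl hrl j.isLt⟩
  have hf : StrictMono f := fun j₁ j₂ h => skipBlock_strictMono h
  have hblock (j : Fin r) (hj : K ≤ σ (f j) ∧ (σ (f j) : ℕ) < K + l) : (j : ℕ) = A :=
    (skipBlock_mem_iff hl).1 ((hσ (f j)).2 hj)
  obtain ⟨π, hπ, hσπ⟩ := exists_perm_contains_of_lt_iff σ hf
    (fun j => ⟨collapseBlock l K (σ (f j)), hval _⟩) fun j₁ j₂ => by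
      rcases eq_or_ne j₁ j₂ with rfl | hne
      · simp
      · refine (collapseBlock_lt_collapseBlock_iff ?_).symm
        by_contra! h
        exact hne (Fin.ext ((hblock j₁ h.1).trans (hblock j₂ h.2).symm))
  refine ⟨π, fun j i hi => ?_, hσπ⟩
  obtain rfl : i = f j := Fin.ext hi
  rw [hπ]

namespace IsInflationAt

variable {σ' : Perm (Fin n)} {A' : ℕ} {π : Perm (Fin r)} {β : Perm (Fin l)}

theorem val_eq_iff (h : IsInflationAt σ A K π β) (hl : 1 ≤ l) (hrl : r + l = n + 1) (j : Fin r) :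
    (π j : ℕ) = K ↔ (j : ℕ) = A := by
  rw [h.collapse j ⟨_, skipBlock_lt hl hrl j.isLt⟩ rfl, collapseBlock_eq_iff hl, ← h.isBlock, skipBlock_mem_iff hl]

theorem eq (h : IsInflationAt σ A K π β) (h' : IsInflationAt σ' A' K π β) (hl : 1 ≤ l)
    (hrl : r + l = n + 1) : σ = σ' := by
  -- the block position is recovered from `π` as the preimage of `K`
  have hA' : A' < r := by have := h'.add_le; omega
  obtain rfl : A' = A :=
    (h.val_eq_iff hl hrl ⟨A', hA'⟩).1 ((h'.val_eq_iff hl hrl ⟨A', hA'⟩).2 rfl)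
  refine Equiv.ext fun i => Fin.ext ?_
  by_cases hi : A' ≤ i ∧ (i : ℕ) < A' + l
  · have hσ := h.block ⟨i - A', by omega⟩ i (by simp only; omega)
    have hσ' := h'.block ⟨i - A', by omega⟩ i (by simp only; omega)
    omega
  · obtain ⟨j, hj, hji⟩ := exists_skipBlock_eq hrl hA' i.isLt (by omega)
    refine (collapseBlock_inj (mt (h'.isBlock i).2 hi)).1 ?_
    rw [← h.collapse ⟨j, hj⟩ i hji.symm, ← h'.collapse ⟨j, hj⟩ i hji.symm]

end IsInflationAt

end Inflation

theorem ncard_clusterEvent_inter_avoidSet_le {m : ℕ} (τ : Perm (Fin m)) {n l k : ℕ} (hl : 1 ≤ l)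
    (hln : l ≤ n) (hk1 : 1 ≤ k) (hk2 : k + l ≤ n + 1) :
    (ClusterEvent n l k ∩ AvoidSet n τ).ncard ≤
      (AvoidSet (n - l + 1) τ).ncard * (AvoidSet l τ).ncard := by
  rw [← Set.ncard_prod]
  refine Set.ncard_le_ncard_of_exists_of_leftUnique
    (R := fun σ p => ∃ A, IsInflationAt σ A (k - 1) p.1 p.2) ?_ ?_
  · rintro σ ⟨⟨a, ha1, ha2, hσa⟩, hστ⟩
    have hσ := hσa.isBlock ha1 hk1
    obtain ⟨π, hπ, hσπ⟩ :=
      hσ.exists_collapse_pattern (r := n - l + 1) hl (by omega) (by omega)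
    obtain ⟨β, hβ, hσβ⟩ := hσ.exists_block_pattern (by omega)
    exact ⟨(π, β), ⟨hστ.of_contains hσπ, hστ.of_contains hσβ⟩, a - 1, by omega, hσ, hπ, hβ⟩
  · rintro σ σ' p ⟨A, h⟩ ⟨A', h'⟩
    exact h.eq h' hl (by omega)

theorem avoid_cluster_upper_bound_general (m : ℕ) (τ : Equiv.Perm (Fin m))
    (n : ℕ) (l : ℕ) (hl2 : 2 ≤ l) (hln : l ≤ n - 1)
    (k : ℕ) (hk1 : 1 ≤ k) (hk2 : k ≤ n - l + 1) :
    (ClusterEvent n l k ∩ AvoidSet n τ).ncard ≤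
      (AvoidSet (n - l + 1) τ).ncard * (AvoidSet l τ).ncard ∧
    ((ClusterEvent n l k ∩ AvoidSet n τ).ncard : ℝ) / ((AvoidSet n τ).ncard : ℝ) ≤
      (((AvoidSet (n - l + 1) τ).ncard * (AvoidSet l τ).ncard : ℕ) : ℝ) /
        ((AvoidSet n τ).ncard : ℝ) := by
  have hcount :=
    ncard_clusterEvent_inter_avoidSet_le τ (n := n) (l := l) (by omega) (by omega) hk1 (by omega)
  exact ⟨hcount, div_le_div_of_nonneg_right (by exact_mod_cast hcount) (Nat.cast_nonneg _)⟩

/-- upper bound on the number (and probability) of `τ`-avoiding permutations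
in `A^{(n)}_{l;k}`. -/
theorem avoid_cluster_upper_bound (m : ℕ) (hm : 2 ≤ m) (τ : Equiv.Perm (Fin m))
    (n : ℕ) (hn : 3 ≤ n) (l : ℕ) (hl2 : 2 ≤ l) (hln : l ≤ n - 1)
    (k : ℕ) (hk1 : 1 ≤ k) (hk2 : k ≤ n - l + 1) :
    (ClusterEvent n l k ∩ AvoidSet n τ).ncard ≤
      (AvoidSet (n - l + 1) τ).ncard * (AvoidSet l τ).ncard ∧
    ((ClusterEvent n l k ∩ AvoidSet n τ).ncard : ℝ) / ((AvoidSet n τ).ncard : ℝ) ≤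
      (((AvoidSet (n - l + 1) τ).ncard * (AvoidSet l τ).ncard : ℕ) : ℝ) /
        ((AvoidSet n τ).ncard : ℝ) :=
  avoid_cluster_upper_bound_general m τ n l hl2 hln k hk1 hk2
end

section
/- Let m ≥ 2 and let τ ∈ S_m be a permutation that does not contain tightly at least one of the patterns 12 and 21. Then for all n ≥ 3, all l with 2 ≤ l ≤ n-1, and all k with 1 ≤ k ≤ n-l+1, one has |A^{(n)}_{l;k} ∩ S_n(τ)| ≥ |S_{n-l+1}(τ)|; equivalently, P_n^{av(τ)}(A^{(n)}_{l;k}) ≥ |S_{n-l+1}(τ)| / |S_n(τ)|. -/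
/-!
Inflate the entry of value `K` of a `τ`-avoider `σ ∈ S_s` into a monotone block of `d + 1`
consecutive values `K, …, K + d`, increasing if `τ` has no tight `12` and decreasing if it has no
tight `21`. The result is a permutation of `s + d` with a cluster at values `K, …, K + d`, and
`σ` is recovered from it, so it suffices to see that it still avoids `τ`. An occurrence of `τ`
using at most one entry of the block collapses to an occurrence in `σ`. If it uses two, it uses
two adjacent pattern entries in the block; since `τ` has no tight pair of that direction, some
pattern entry has a value strictly between theirs, so it lies in the block as well, hence between
them in position, which is absurd.
-/

open Filter

open Equiv Function

section Tight

variable {m : ℕ} {τ : Perm (Fin m)} {i j : Fin m}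

lemma exists_between_of_not_containsTightly12 (hτ : ¬ ContainsTightly12 τ)
    (hij : (j : ℕ) = i + 1) (hlt : τ i < τ j) : ∃ h, τ i < τ h ∧ τ h < τ j := by
  have hne : (τ j : ℕ) ≠ τ i + 1 := fun h ↦ hτ ⟨i, j, hij, h⟩
  rw [Fin.lt_def] at hlt
  have hm : (τ i : ℕ) + 1 < m := by have := (τ j).isLt; omega
  refine ⟨τ.symm ⟨τ i + 1, hm⟩, ?_, ?_⟩ <;>
    rw [apply_symm_apply, Fin.lt_def] <;> dsimp only <;> omega

lemma exists_between_of_not_containsTightly21 (hτ : ¬ ContainsTightly21 τ)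
    (hij : (j : ℕ) = i + 1) (hlt : τ j < τ i) : ∃ h, τ j < τ h ∧ τ h < τ i := by
  have hne : (τ i : ℕ) ≠ τ j + 1 := fun h ↦ hτ ⟨i, j, hij, h⟩
  rw [Fin.lt_def] at hlt
  have hm : (τ j : ℕ) + 1 < m := by have := (τ i).isLt; omega
  refine ⟨τ.symm ⟨τ j + 1, hm⟩, ?_, ?_⟩ <;>
    rw [apply_symm_apply, Fin.lt_def] <;> dsimp only <;> omega

end Tight

namespace PermInflation

def shiftAbove (K d v : ℕ) : ℕ := if v ≤ K then v else v + d

lemma shiftAbove_strictMono (K d : ℕ) : StrictMono (shiftAbove K d) := by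
  intro a b hab
  unfold shiftAbove
  split_ifs <;> omega

def InBlock (p d i : ℕ) : Prop := p ≤ i ∧ i ≤ p + d

instance (p d i : ℕ) : Decidable (InBlock p d i) := inferInstanceAs (Decidable (_ ∧ _))

section Collapse

variable {s d : ℕ} (p : Fin s)

def collapse (i : Fin (s + d)) : Fin s :=
  ⟨if (i : ℕ) < p then i else if (i : ℕ) ≤ p + d then p else i - d, by split_ifs <;> omega⟩

variable {p}

lemma collapse_of_inBlock {i : Fin (s + d)} (hi : InBlock p d i) : collapse p i = p := by
  unfold InBlock at hi
  ext; simp only [collapse]; split_ifs <;> omega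

lemma collapse_ne_of_not_inBlock {i : Fin (s + d)} (hi : ¬ InBlock p d i) : collapse p i ≠ p := by
  unfold InBlock at hi
  rw [ne_eq, Fin.ext_iff]; simp only [collapse]; split_ifs <;> omega

lemma collapse_lt_collapse {i j : Fin (s + d)} (hij : i < j)
    (h : ¬ (InBlock p d i ∧ InBlock p d j)) : collapse p i < collapse p j := by
  unfold InBlock at h
  rw [Fin.lt_def] at hij ⊢; simp only [collapse]; split_ifs <;> omega

lemma collapse_ne_collapse {i j : Fin (s + d)} (hij : i ≠ j)
    (h : ¬ (InBlock p d i ∧ InBlock p d j)) : collapse p i ≠ collapse p j := by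
  rcases hij.lt_or_gt with hlt | hlt
  · exact (collapse_lt_collapse hlt h).ne
  · exact (collapse_lt_collapse hlt (by tauto)).ne'

lemma exists_collapse_eq {x : Fin s} (hx : x ≠ p) :
    ∃ i : Fin (s + d), ¬ InBlock p d i ∧ collapse p i = x := by
  rw [ne_eq, Fin.ext_iff] at hx
  by_cases hxp : (x : ℕ) < p
  · refine ⟨⟨x, by omega⟩, by simp only [InBlock]; omega, ?_⟩
    ext; simp only [collapse]; split_ifs; omega
  · refine ⟨⟨x + d, by omega⟩, by simp only [InBlock]; omega, ?_⟩
    ext; simp only [collapse]; split_ifs <;> omega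

end Collapse

section Inflate

variable {s : ℕ} (d : ℕ) (ε : Bool) (K : Fin s) (σ : Perm (Fin s))

-- Positions and values are 0-based here, while `ClusterAt` counts from 1.
def inflateVal (i : Fin (s + d)) : ℕ :=
  if InBlock (σ.symm K) d i then
    if ε then (K : ℕ) + ((i : ℕ) - σ.symm K) else (K : ℕ) + ((σ.symm K : ℕ) + d - i)
  else shiftAbove K d (σ (collapse (σ.symm K) i))

variable {d ε K σ}

lemma inflateVal_of_inBlock {i : Fin (s + d)} (hi : InBlock (σ.symm K) d i) :
    inflateVal d ε K σ i =
      if ε then (K : ℕ) + ((i : ℕ) - σ.symm K) else (K : ℕ) + ((σ.symm K : ℕ) + d - i) :=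
  if_pos hi

lemma inflateVal_of_not_inBlock {i : Fin (s + d)} (hi : ¬ InBlock (σ.symm K) d i) :
    inflateVal d ε K σ i = shiftAbove K d (σ (collapse (σ.symm K) i)) :=
  if_neg hi

lemma inflateVal_mem_Icc_iff (i : Fin (s + d)) :
    K ≤ inflateVal d ε K σ i ∧ inflateVal d ε K σ i ≤ K + d ↔ InBlock (σ.symm K) d i := by
  by_cases hi : InBlock (σ.symm K) d i
  · rw [inflateVal_of_inBlock hi, iff_true_intro hi, iff_true]
    unfold InBlock at hi
    cases ε <;> simp only [Bool.false_eq_true, if_false, if_true] <;> omega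
  · have hK : σ (collapse (σ.symm K) i) ≠ K := by
      rw [ne_eq, ← eq_symm_apply]
      exact collapse_ne_of_not_inBlock hi
    rw [ne_eq, Fin.ext_iff] at hK
    rw [inflateVal_of_not_inBlock hi, iff_false_intro hi, iff_false]
    unfold shiftAbove
    split_ifs <;> omega

lemma inflateVal_lt_iff {i j : Fin (s + d)}
    (h : ¬ (InBlock (σ.symm K) d i ∧ InBlock (σ.symm K) d j)) :
    inflateVal d ε K σ i < inflateVal d ε K σ j ↔
      σ (collapse (σ.symm K) i) < σ (collapse (σ.symm K) j) := by
  have hK {x : Fin (s + d)} (hx : ¬ InBlock (σ.symm K) d x) : (σ (collapse (σ.symm K) x) : ℕ) ≠ K :=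
    fun h ↦ collapse_ne_of_not_inBlock hx (by rw [eq_symm_apply]; exact Fin.ext h)
  by_cases hi : InBlock (σ.symm K) d i <;> by_cases hj : InBlock (σ.symm K) d j
  · exact absurd ⟨hi, hj⟩ h
  · have hvi := (inflateVal_mem_Icc_iff (ε := ε) i).2 hi
    have hKj := hK hj
    rw [collapse_of_inBlock hi, apply_symm_apply, inflateVal_of_not_inBlock hj, Fin.lt_def]
    unfold shiftAbove
    split_ifs <;> omega
  · have hvj := (inflateVal_mem_Icc_iff (ε := ε) j).2 hj
    have hKi := hK hi
    rw [collapse_of_inBlock hj, apply_symm_apply, inflateVal_of_not_inBlock hi, Fin.lt_def]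
    unfold shiftAbove
    split_ifs <;> omega
  · rw [inflateVal_of_not_inBlock hi, inflateVal_of_not_inBlock hj, Fin.lt_def]
    exact (shiftAbove_strictMono K d).lt_iff_lt

lemma inflateVal_lt_iff_of_inBlock {i j : Fin (s + d)} (hi : InBlock (σ.symm K) d i)
    (hj : InBlock (σ.symm K) d j) :
    inflateVal d ε K σ i < inflateVal d ε K σ j ↔ if ε then i < j else j < i := by
  rw [inflateVal_of_inBlock hi, inflateVal_of_inBlock hj]
  unfold InBlock at hi hj
  cases ε <;> simp only [Bool.false_eq_true, if_false, if_true, Fin.lt_def] <;> omega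

lemma inflateVal_injective : Injective (inflateVal d ε K σ) := by
  intro i j hij
  by_contra! hne
  by_cases hb : InBlock (σ.symm K) d i ∧ InBlock (σ.symm K) d j
  · obtain ⟨hi, hj⟩ := hb
    rw [inflateVal_of_inBlock hi, inflateVal_of_inBlock hj] at hij
    unfold InBlock at hi hj
    rw [ne_eq, Fin.ext_iff] at hne
    cases ε <;> simp only [Bool.false_eq_true, if_false, if_true] at hij <;> omega
  · have hσ := σ.injective.ne (collapse_ne_collapse hne hb)
    rcases hσ.lt_or_gt with hlt | hlt
    · exact ((inflateVal_lt_iff hb).2 hlt).ne hij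
    · exact ((inflateVal_lt_iff (by tauto)).2 hlt).ne' hij

lemma inflateVal_lt (i : Fin (s + d)) : inflateVal d ε K σ i < s + d := by
  by_cases hi : InBlock (σ.symm K) d i
  · have := (inflateVal_mem_Icc_iff (ε := ε) i).2 hi
    omega
  · have := (σ (collapse (σ.symm K) i)).isLt
    rw [inflateVal_of_not_inBlock hi]
    unfold shiftAbove
    split_ifs <;> omega

variable (d ε K σ) in
noncomputable def inflate : Perm (Fin (s + d)) :=
  Equiv.ofBijective (fun i ↦ ⟨inflateVal d ε K σ i, inflateVal_lt i⟩)
    (Finite.injective_iff_bijective.mp fun _ _ h ↦ inflateVal_injective (congrArg Fin.val h))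

lemma inflate_apply_val (i : Fin (s + d)) : (inflate d ε K σ i : ℕ) = inflateVal d ε K σ i := rfl

lemma inflate_mem_clusterEvent : inflate d ε K σ ∈ ClusterEvent (s + d) (d + 1) (K + 1) := by
  have hp := (σ.symm K).isLt
  refine ⟨σ.symm K + 1, by omega, by omega, ?_⟩
  ext v
  simp only [Finset.mem_image, Finset.mem_filter, Finset.mem_univ, true_and, Finset.mem_Ico,
    inflate_apply_val]
  constructor
  · rintro ⟨i, hi, rfl⟩
    have := (inflateVal_mem_Icc_iff (ε := ε) (K := K) (σ := σ) i).2 (by unfold InBlock; omega)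
    omega
  · intro hv
    obtain ⟨i, hi⟩ := (inflate d ε K σ).surjective ⟨v - 1, by omega⟩
    have hiv : inflateVal d ε K σ i = v - 1 := by rw [← inflate_apply_val, hi]
    have := (inflateVal_mem_Icc_iff (ε := ε) (K := K) (σ := σ) i).1 (by omega)
    unfold InBlock at this
    exact ⟨i, by omega, by omega⟩

variable (d ε K) in
lemma inflate_injective : Injective (inflate (s := s) d ε K) := by
  intro σ₁ σ₂ h
  have hval (i : Fin (s + d)) : inflateVal d ε K σ₁ i = inflateVal d ε K σ₂ i := by
    rw [← inflate_apply_val, ← inflate_apply_val, h]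
  have hblock (i : Fin (s + d)) : InBlock (σ₁.symm K) d i ↔ InBlock (σ₂.symm K) d i := by
    rw [← inflateVal_mem_Icc_iff (ε := ε), ← inflateVal_mem_Icc_iff (ε := ε), hval]
  have hp : σ₁.symm K = σ₂.symm K := by
    have hself (p : Fin s) : InBlock p d (Fin.castAdd d p) := by
      simp only [InBlock, Fin.val_castAdd]; omega
    have h₁ := (hblock _).1 (hself (σ₁.symm K))
    have h₂ := (hblock _).2 (hself (σ₂.symm K))
    simp only [InBlock, Fin.val_castAdd] at h₁ h₂
    exact Fin.ext (by omega)
  ext x : 1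
  by_cases hx : x = σ₁.symm K
  · rw [hx, apply_symm_apply, hp, apply_symm_apply]
  · obtain ⟨i, hi, rfl⟩ := exists_collapse_eq (d := d) hx
    have hi₂ : ¬ InBlock (σ₂.symm K) d i := by rwa [← hp]
    have := hval i
    rw [inflateVal_of_not_inBlock hi, inflateVal_of_not_inBlock hi₂, ← hp] at this
    exact Fin.ext ((shiftAbove_strictMono K d).injective this)

lemma lt_and_lt_of_inflateVal_between {x y z : Fin (s + d)} (hx : InBlock (σ.symm K) d x)
    (hy : InBlock (σ.symm K) d y) (hz : InBlock (σ.symm K) d z) (hxz : x < z)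
    (h : (inflateVal d ε K σ x < inflateVal d ε K σ y ∧
          inflateVal d ε K σ y < inflateVal d ε K σ z) ∨
        (inflateVal d ε K σ z < inflateVal d ε K σ y ∧
          inflateVal d ε K σ y < inflateVal d ε K σ x)) :
    x < y ∧ y < z := by
  rw [inflateVal_of_inBlock hx, inflateVal_of_inBlock hy, inflateVal_of_inBlock hz] at h
  unfold InBlock at hx hy hz
  simp only [Fin.lt_def] at hxz ⊢
  cases ε <;> simp only [Bool.false_eq_true, if_false, if_true] at h <;> omega

section Avoid

variable {m : ℕ} {τ : Perm (Fin m)} {f : Fin m → Fin (s + d)}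

lemma not_inBlock_of_adjacent (hτ : if ε then ¬ ContainsTightly12 τ else ¬ ContainsTightly21 τ)
    (hf : StrictMono f) (hocc : ∀ j k, inflate d ε K σ (f j) < inflate d ε K σ (f k) ↔ τ j < τ k)
    {j j' : Fin m} (hjj' : (j' : ℕ) = j + 1) (hj : InBlock (σ.symm K) d (f j)) :
    ¬ InBlock (σ.symm K) d (f j') := by
  intro hj'
  have hocc' (a b : Fin m) :
      inflateVal d ε K σ (f a) < inflateVal d ε K σ (f b) ↔ τ a < τ b := hocc a b
  have hff : f j < f j' := hf (Fin.lt_def.2 (by omega))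
  obtain ⟨h, hτh⟩ : ∃ h, (τ j < τ h ∧ τ h < τ j') ∨ (τ j' < τ h ∧ τ h < τ j) := by
    cases ε
    · have hlt := (hocc' j' j).1 ((inflateVal_lt_iff_of_inBlock hj' hj).2 hff)
      obtain ⟨h, h₁, h₂⟩ := exists_between_of_not_containsTightly21 hτ hjj' hlt
      exact ⟨h, .inr ⟨h₁, h₂⟩⟩
    · have hlt := (hocc' j j').1 ((inflateVal_lt_iff_of_inBlock hj hj').2 hff)
      obtain ⟨h, h₁, h₂⟩ := exists_between_of_not_containsTightly12 hτ hjj' hlt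
      exact ⟨h, .inl ⟨h₁, h₂⟩⟩
  simp only [← hocc'] at hτh
  have hh : InBlock (σ.symm K) d (f h) := by
    have := (inflateVal_mem_Icc_iff (ε := ε) _).2 hj
    have := (inflateVal_mem_Icc_iff (ε := ε) _).2 hj'
    exact (inflateVal_mem_Icc_iff (ε := ε) _).1 (by omega)
  obtain ⟨h₁, h₂⟩ := lt_and_lt_of_inflateVal_between hj hh hj' hff hτh
  rw [hf.lt_iff_lt, Fin.lt_def] at h₁ h₂
  omega

lemma inflate_avoids (hτ : if ε then ¬ ContainsTightly12 τ else ¬ ContainsTightly21 τ)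
    (hσ : Avoids σ τ) : Avoids (inflate d ε K σ) τ := by
  rintro ⟨f, hf, hocc⟩
  have hsep (j j' : Fin m) (hne : j ≠ j') :
      ¬ (InBlock (σ.symm K) d (f j) ∧ InBlock (σ.symm K) d (f j')) := by
    wlog hlt : j < j' generalizing j j'
    · exact fun h ↦ this j' j hne.symm (lt_of_le_of_ne (not_lt.1 hlt) hne.symm) ⟨h.2, h.1⟩
    rintro ⟨hj, hj'⟩
    rw [Fin.lt_def] at hlt
    have hsucc : (j : ℕ) + 1 < m := by omega
    refine not_inBlock_of_adjacent (j' := ⟨j + 1, hsucc⟩) hτ hf hocc rfl hj ?_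
    have h₁ : f j < f ⟨j + 1, hsucc⟩ := hf (Fin.lt_def.2 (Nat.lt_succ_self _))
    have h₂ : f ⟨j + 1, hsucc⟩ ≤ f j' := hf.monotone (Fin.le_def.2 hlt)
    unfold InBlock at hj hj' ⊢
    rw [Fin.lt_def] at h₁
    rw [Fin.le_def] at h₂
    omega
  refine hσ ⟨fun j ↦ collapse (σ.symm K) (f j),
    fun j j' hlt ↦ collapse_lt_collapse (hf hlt) (hsep j j' hlt.ne), fun j j' ↦ ?_⟩
  rcases eq_or_ne j j' with rfl | hne
  · simp
  · rw [← inflateVal_lt_iff (ε := ε) (hsep j j' hne)]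
    exact hocc j j'

end Avoid

end Inflate

end PermInflation

open PermInflation in
lemma ncard_avoidSet_le_ncard_clusterEvent_inter {s m : ℕ} {τ : Perm (Fin m)}
    (hτ : ¬ ContainsTightly12 τ ∨ ¬ ContainsTightly21 τ) (d : ℕ) (K : Fin s) :
    (AvoidSet s τ).ncard ≤ (ClusterEvent (s + d) (d + 1) (K + 1) ∩ AvoidSet (s + d) τ).ncard := by
  obtain ⟨ε, hε⟩ : ∃ ε : Bool, if ε then ¬ ContainsTightly12 τ else ¬ ContainsTightly21 τ := by
    rcases hτ with h | h
    · exact ⟨true, h⟩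
    · exact ⟨false, h⟩
  exact Set.ncard_le_ncard_of_injOn (inflate d ε K)
    (fun σ hσ ↦ ⟨inflate_mem_clusterEvent, inflate_avoids hε hσ⟩) (inflate_injective d ε K).injOn

theorem avoid_cluster_lower_bound_general (m : ℕ) (τ : Equiv.Perm (Fin m))
    (hτ : ¬ ContainsTightly12 τ ∨ ¬ ContainsTightly21 τ)
    (n : ℕ) (l : ℕ) (hl2 : 2 ≤ l) (hln : l ≤ n - 1)
    (k : ℕ) (hk1 : 1 ≤ k) (hk2 : k ≤ n - l + 1) :
    (AvoidSet (n - l + 1) τ).ncard ≤ (ClusterEvent n l k ∩ AvoidSet n τ).ncard ∧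
    ((AvoidSet (n - l + 1) τ).ncard : ℝ) / ((AvoidSet n τ).ncard : ℝ) ≤
      ((ClusterEvent n l k ∩ AvoidSet n τ).ncard : ℝ) / ((AvoidSet n τ).ncard : ℝ) := by
  obtain ⟨s, d, K, rfl, rfl, rfl⟩ : ∃ s d, ∃ K : Fin s, n = s + d ∧ l = d + 1 ∧ k = K + 1 :=
    ⟨n - l + 1, l - 1, ⟨k - 1, by omega⟩, by omega, by omega, by simp only; omega⟩
  rw [show s + d - (d + 1) + 1 = s by omega]
  have hcount := ncard_avoidSet_le_ncard_clusterEvent_inter hτ d K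
  exact ⟨hcount, div_le_div_of_nonneg_right (by exact_mod_cast hcount) (Nat.cast_nonneg _)⟩

/-- lower bound when `τ` does not contain tightly at least one of 12 and 21. -/
theorem avoid_cluster_lower_bound (m : ℕ) (hm : 2 ≤ m) (τ : Equiv.Perm (Fin m))
    (hτ : ¬ ContainsTightly12 τ ∨ ¬ ContainsTightly21 τ)
    (n : ℕ) (hn : 3 ≤ n) (l : ℕ) (hl2 : 2 ≤ l) (hln : l ≤ n - 1)
    (k : ℕ) (hk1 : 1 ≤ k) (hk2 : k ≤ n - l + 1) :
    (AvoidSet (n - l + 1) τ).ncard ≤ (ClusterEvent n l k ∩ AvoidSet n τ).ncard ∧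
    ((AvoidSet (n - l + 1) τ).ncard : ℝ) / ((AvoidSet n τ).ncard : ℝ) ≤
      ((ClusterEvent n l k ∩ AvoidSet n τ).ncard : ℝ) / ((AvoidSet n τ).ncard : ℝ) :=
  avoid_cluster_lower_bound_general m τ hτ n l hl2 hln k hk1 hk2
end

section
/- Let m ≥ 2 and let τ ∈ S_m be a permutation that contains tightly neither the pattern 12 nor the pattern 21. Then for all n ≥ 3, all l with 2 ≤ l ≤ n-1, and all k with 1 ≤ k ≤ n-l+1, one has |A^{(n)}_{l;k} ∩ S_n(τ)| ≥ 2·|S_{n-l+1}(τ)|; equivalently, P_n^{av(τ)}(A^{(n)}_{l;k}) ≥ 2·|S_{n-l+1}(τ)| / |S_n(τ)|. -/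
open Filter

open Function

/-!
Inflate the entry `v = k - 1` of a `τ`-avoiding permutation `σ` of length `n - l + 1` into an
increasing or a decreasing run of `l` consecutive values; this lands in `A_{l;k}`, and `σ` and the
direction of the run can be read off the result. The inflation still avoids `τ`: an occurrence
meeting the run twice meets it at two adjacent pattern positions `j, j + 1`, and since `τ j` and
`τ (j + 1)` are not consecutive values, the entry of the occurrence whose value lies between them
would also lie in the run, strictly between the positions `j` and `j + 1`. So an occurrence meets
the run at most once and collapses to an occurrence in `σ`.
-/

theorem exists_between_of_not_containsTightly {m : ℕ} {τ : Equiv.Perm (Fin m)}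
    (h12 : ¬ ContainsTightly12 τ) (h21 : ¬ ContainsTightly21 τ) {j j' : Fin m}
    (hj' : (j' : ℕ) = j + 1) : ∃ i, τ j < τ i ∧ τ i < τ j' ∨ τ j' < τ i ∧ τ i < τ j := by
  have hne : τ j ≠ τ j' := τ.injective.ne (Fin.ne_of_val_ne (by omega))
  rcases hne.lt_or_gt with hlt | hgt
  · have : (τ j : ℕ) + 1 < τ j' := by
      have : (τ j' : ℕ) ≠ τ j + 1 := fun h => h12 ⟨j, j', hj', h⟩
      rw [Fin.lt_def] at hlt; omega
    refine ⟨τ.symm ⟨(τ j : ℕ) + 1, by omega⟩, Or.inl ?_⟩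
    simp only [Equiv.apply_symm_apply, Fin.lt_def]
    omega
  · have : (τ j' : ℕ) + 1 < τ j := by
      have : (τ j : ℕ) ≠ τ j' + 1 := fun h => h21 ⟨j, j', hj', h⟩
      rw [Fin.lt_def] at hgt; omega
    refine ⟨τ.symm ⟨(τ j' : ℕ) + 1, by omega⟩, Or.inr ?_⟩
    simp only [Equiv.apply_symm_apply, Fin.lt_def]
    omega

section Inflation

variable {ι κ α β : Type*} [LinearOrder ι] [LinearOrder κ] [LinearOrder α] [LinearOrder β]

/-- `π` is an inflation of `σ` along the monotone map `c`: the fibre of `c` over `p` is a block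
of entries of `π` that sit, relative to all other entries, where `σ p` sits in `σ`. -/
structure IsInflation (π : ι → α) (σ : κ → β) (c : ι → κ) : Prop where
  monotone : Monotone c
  lt_iff_lt : ∀ ⦃i j⦄, c i ≠ c j → (π i < π j ↔ σ (c i) < σ (c j))

namespace IsInflation

variable {π : ι → α} {σ : κ → β} {c : ι → κ}

theorem injective (h : IsInflation π σ c) (hσ : Injective σ)
    (hfib : ∀ p, Set.InjOn π (c ⁻¹' {p})) : Injective π := by
  intro i j hij
  have hc : c i = c j := by
    by_contra hne
    rcases (hσ.ne hne).lt_or_gt with hlt | hlt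
    · exact (h.lt_iff_lt hne).2 hlt |>.ne hij
    · exact (h.lt_iff_lt (Ne.symm hne)).2 hlt |>.ne hij.symm
  exact hfib (c j) hc rfl hij

theorem apply_eq_of_lt_of_lt (h : IsInflation π σ c) {x y z : ι} (hxz : c x = c z)
    (hxy : π x < π y) (hyz : π y < π z) : c y = c x := by
  by_contra hne
  have hxy' := (h.lt_iff_lt (Ne.symm hne)).1 hxy
  have hyz' := (h.lt_iff_lt (hxz ▸ hne)).1 hyz
  rw [← hxz] at hyz'
  exact lt_asymm hxy' hyz'

theorem lt_and_lt_of_lt_of_lt (h : IsInflation π σ c)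
    (hfib : ∀ p, StrictMonoOn π (c ⁻¹' {p}) ∨ StrictAntiOn π (c ⁻¹' {p})) {x y z : ι}
    (hxz : c x = c z) (hxy : π x < π y) (hyz : π y < π z) :
    x < y ∧ y < z ∨ z < y ∧ y < x := by
  have hy : c y = c x := h.apply_eq_of_lt_of_lt hxz hxy hyz
  have hx : x ∈ c ⁻¹' {c x} := rfl
  have hz : z ∈ c ⁻¹' {c x} := hxz.symm
  rcases hfib (c x) with hmono | hanti
  · exact Or.inl ⟨(hmono.lt_iff_lt hx hy).1 hxy, (hmono.lt_iff_lt hy hz).1 hyz⟩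
  · exact Or.inr ⟨(hanti.lt_iff_gt hy hz).1 hyz, (hanti.lt_iff_gt hx hy).1 hxy⟩

theorem injective_comp_of_strictMono {m : ℕ} {τ : Equiv.Perm (Fin m)} (h : IsInflation π σ c)
    (hfib : ∀ p, StrictMonoOn π (c ⁻¹' {p}) ∨ StrictAntiOn π (c ⁻¹' {p}))
    (h12 : ¬ ContainsTightly12 τ) (h21 : ¬ ContainsTightly21 τ) {f : Fin m → ι}
    (hf : StrictMono f) (hpat : ∀ j k, π (f j) < π (f k) ↔ τ j < τ k) : Injective (c ∘ f) := by
  suffices hsucc : ∀ j j' : Fin m, (j' : ℕ) = j + 1 → c (f j) ≠ c (f j') by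
    intro j₁ j₂ heq
    by_contra hne
    wlog hlt : j₁ < j₂ generalizing j₁ j₂
    · exact this heq.symm (Ne.symm hne) (lt_of_le_of_ne (not_lt.1 hlt) (Ne.symm hne))
    have hj₁ : (j₁ : ℕ) + 1 < m := by omega
    refine hsucc j₁ ⟨j₁ + 1, hj₁⟩ rfl (le_antisymm (h.monotone (hf.monotone ?_)) ?_)
    · exact Fin.le_def.2 (by simp)
    · exact (h.monotone (hf.monotone (Fin.le_def.2 (by simp; omega)))).trans_eq heq.symm
  intro j j' hj' hc
  obtain ⟨i, hi⟩ := exists_between_of_not_containsTightly h12 h21 hj'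
  rcases hi with ⟨hji, hij'⟩ | ⟨hj'i, hij⟩
  · rcases h.lt_and_lt_of_lt_of_lt hfib hc ((hpat _ _).2 hji) ((hpat _ _).2 hij') with h' | h'
    all_goals simp only [hf.lt_iff_lt, Fin.lt_def] at h'; omega
  · rcases h.lt_and_lt_of_lt_of_lt hfib hc.symm ((hpat _ _).2 hj'i) ((hpat _ _).2 hij) with h' | h'
    all_goals simp only [hf.lt_iff_lt, Fin.lt_def] at h'; omega

theorem avoids {M N m : ℕ} {π : Fin M → Fin M} {σ : Fin N → Fin N} {c : Fin M → Fin N}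
    {τ : Equiv.Perm (Fin m)} (h : IsInflation π σ c)
    (hfib : ∀ p, StrictMonoOn π (c ⁻¹' {p}) ∨ StrictAntiOn π (c ⁻¹' {p}))
    (h12 : ¬ ContainsTightly12 τ) (h21 : ¬ ContainsTightly21 τ) (hσ : Avoids σ τ) :
    Avoids π τ := by
  rintro ⟨f, hf, hpat⟩
  have hinj := h.injective_comp_of_strictMono hfib h12 h21 hf hpat
  refine hσ ⟨c ∘ f, (h.monotone.comp hf.monotone).strictMono_of_injective hinj, fun j k => ?_⟩
  rcases eq_or_ne j k with rfl | hjk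
  · simp
  · exact (h.lt_iff_lt (hinj.ne hjk)).symm.trans (hpat j k)

end IsInflation

end Inflation

def liftAbove (v L x : ℕ) : ℕ := if x < v then x else x + L

/-- Where the entry `x` of a permutation ends up once its entry `v` is inflated to a block of the
values `v, …, v + L`. -/
def valueSlot (v L x : ℕ) : Set ℕ := if x = v then Set.Icc v (v + L) else {liftAbove v L x}

theorem lt_iff_lt_of_mem_valueSlot {v L x x' y y' : ℕ} (hy : y ∈ valueSlot v L x)
    (hy' : y' ∈ valueSlot v L x') (hne : x ≠ x') : y < y' ↔ x < x' := by
  unfold valueSlot liftAbove at hy hy'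
  split_ifs at hy hy' <;> simp only [Set.mem_Icc, Set.mem_singleton_iff] at hy hy' <;> omega

theorem eq_of_mem_valueSlot {v L x x' y : ℕ} (hy : y ∈ valueSlot v L x)
    (hy' : y ∈ valueSlot v L x') : x = x' := by
  by_contra hne
  rcases Nat.lt_or_gt_of_ne hne with hlt | hlt
  · exact lt_irrefl y ((lt_iff_lt_of_mem_valueSlot hy hy' hne).2 hlt)
  · exact lt_irrefl y ((lt_iff_lt_of_mem_valueSlot hy' hy (Ne.symm hne)).2 hlt)

namespace Fin

variable {N : ℕ}

def collapseBlock (p : Fin N) (L : ℕ) (i : Fin (N + L)) : Fin N :=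
  ⟨if (i : ℕ) ≤ p then i else if (i : ℕ) ≤ p + L then p else i - L, by split_ifs <;> omega⟩

theorem collapseBlock_eq_iff {p : Fin N} {L : ℕ} {i : Fin (N + L)} :
    collapseBlock p L i = p ↔ (p : ℕ) ≤ i ∧ (i : ℕ) ≤ p + L := by
  simp only [collapseBlock, Fin.ext_iff]
  split_ifs <;> omega

theorem monotone_collapseBlock (p : Fin N) (L : ℕ) : Monotone (collapseBlock p L) := by
  intro i j hij
  simp only [collapseBlock, Fin.le_def] at hij ⊢
  split_ifs <;> omega

theorem collapseBlock_surjective (p : Fin N) (L : ℕ) : Surjective (collapseBlock p L) := by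
  intro a
  refine ⟨⟨if a ≤ p then a else a + L, by split_ifs <;> omega⟩, ?_⟩
  simp only [collapseBlock, Fin.ext_iff]
  split_ifs <;> omega

theorem subsingleton_collapseBlock_preimage {p q : Fin N} (L : ℕ) (hq : q ≠ p) :
    (collapseBlock p L ⁻¹' {q}).Subsingleton := by
  intro i hi j hj
  simp only [Set.mem_preimage, Set.mem_singleton_iff, collapseBlock, Fin.ext_iff] at hi hj hq
  ext
  split_ifs at hi hj <;> omega

end Fin

namespace Equiv.Perm

variable {N L : ℕ}

/-- The inflation `σ[1, …, 1, β, 1, …, 1]`: the entry `v` of `σ` is replaced by the block of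
values `v + β 0, …, v + β L`, and the larger entries of `σ` are raised by `L`. -/
def inflateFun (σ : Perm (Fin N)) (v : Fin N) (β : Perm (Fin (L + 1))) (i : Fin (N + L)) :
    Fin (N + L) :=
  if h : (σ.symm v : ℕ) ≤ i ∧ (i : ℕ) ≤ σ.symm v + L then
    ⟨v + β ⟨i - σ.symm v, by omega⟩, by omega⟩
  else
    ⟨liftAbove v L (σ (Fin.collapseBlock (σ.symm v) L i)), by unfold liftAbove; split_ifs <;> omega⟩

variable {σ : Perm (Fin N)} {v : Fin N} {β : Perm (Fin (L + 1))}

theorem inflateFun_of_le_of_le {i : Fin (N + L)} (h₁ : (σ.symm v : ℕ) ≤ i)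
    (h₂ : (i : ℕ) ≤ σ.symm v + L) :
    (inflateFun σ v β i : ℕ) = v + β ⟨i - σ.symm v, by omega⟩ := by
  rw [inflateFun, dif_pos ⟨h₁, h₂⟩]

theorem inflateFun_add (t : Fin (L + 1)) :
    (inflateFun σ v β ⟨σ.symm v + t, by omega⟩ : ℕ) = v + β t := by
  rw [inflateFun_of_le_of_le (by simp) (by simp; omega)]
  simp

theorem inflateFun_mem_valueSlot (i : Fin (N + L)) :
    (inflateFun σ v β i : ℕ) ∈ valueSlot v L (σ (Fin.collapseBlock (σ.symm v) L i)) := by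
  by_cases h : (σ.symm v : ℕ) ≤ i ∧ (i : ℕ) ≤ σ.symm v + L
  · rw [Fin.collapseBlock_eq_iff.2 h, apply_symm_apply, valueSlot, if_pos rfl,
      inflateFun_of_le_of_le h.1 h.2, Set.mem_Icc]
    omega
  · have hv : σ (Fin.collapseBlock (σ.symm v) L i) ≠ v := fun hv =>
      h (Fin.collapseBlock_eq_iff.1 (eq_symm_apply σ |>.2 hv))
    rw [valueSlot, if_neg (Fin.val_injective.ne hv), inflateFun, dif_neg h]
    rfl

theorem isInflation_inflateFun :
    IsInflation (inflateFun σ v β) σ (Fin.collapseBlock (σ.symm v) L) where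
  monotone := Fin.monotone_collapseBlock _ _
  lt_iff_lt i j hne := by
    rw [Fin.lt_def, Fin.lt_def]
    exact lt_iff_lt_of_mem_valueSlot (inflateFun_mem_valueSlot i) (inflateFun_mem_valueSlot j)
      (Fin.val_injective.ne (σ.injective.ne hne))

theorem injOn_inflateFun_preimage (q : Fin N) :
    Set.InjOn (inflateFun σ v β) (Fin.collapseBlock (σ.symm v) L ⁻¹' {q}) := by
  rcases eq_or_ne q (σ.symm v) with rfl | hq
  · intro i hi j hj hij
    rw [Set.mem_preimage, Set.mem_singleton_iff, Fin.collapseBlock_eq_iff] at hi hj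
    have hval := congrArg Fin.val hij
    rw [inflateFun_of_le_of_le hi.1 hi.2, inflateFun_of_le_of_le hj.1 hj.2, Nat.add_left_cancel_iff,
      Fin.val_inj, β.apply_eq_iff_eq, Fin.mk.injEq] at hval
    ext
    omega
  · exact (Fin.subsingleton_collapseBlock_preimage L hq).injOn _

theorem strictMonoOn_or_strictAntiOn_inflateFun (hβ : StrictMono β ∨ StrictAnti β) (q : Fin N) :
    StrictMonoOn (inflateFun σ v β) (Fin.collapseBlock (σ.symm v) L ⁻¹' {q}) ∨
      StrictAntiOn (inflateFun σ v β) (Fin.collapseBlock (σ.symm v) L ⁻¹' {q}) := by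
  rcases eq_or_ne q (σ.symm v) with rfl | hq
  · have hblock : ∀ ⦃i⦄, i ∈ Fin.collapseBlock (σ.symm v) L ⁻¹' {σ.symm v} → ∀ ⦃j⦄,
        j ∈ Fin.collapseBlock (σ.symm v) L ⁻¹' {σ.symm v} → i < j → ∃ s t : Fin (L + 1),
          s < t ∧ (inflateFun σ v β i : ℕ) = v + β s ∧ (inflateFun σ v β j : ℕ) = v + β t := by
      intro i hi j hj hij
      rw [Set.mem_preimage, Set.mem_singleton_iff, Fin.collapseBlock_eq_iff] at hi hj
      exact ⟨_, _, Fin.mk_lt_mk.2 (Nat.sub_lt_sub_right hi.1 hij), inflateFun_of_le_of_le hi.1 hi.2,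
        inflateFun_of_le_of_le hj.1 hj.2⟩
    rcases hβ with hβ | hβ
    · refine Or.inl fun i hi j hj hij => ?_
      obtain ⟨s, t, hst, hs, ht⟩ := hblock hi hj hij
      have := hβ hst
      rw [Fin.lt_def] at this ⊢
      omega
    · refine Or.inr fun i hi j hj hij => ?_
      obtain ⟨s, t, hst, hs, ht⟩ := hblock hi hj hij
      have := hβ hst
      rw [Fin.lt_def] at this ⊢
      omega
  · exact Or.inl ((Fin.subsingleton_collapseBlock_preimage L hq).strictMonoOn _)

noncomputable def inflate (σ : Perm (Fin N)) (v : Fin N) (β : Perm (Fin (L + 1))) :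
    Perm (Fin (N + L)) :=
  Equiv.ofBijective (inflateFun σ v β) <| Finite.injective_iff_bijective.1 <|
    isInflation_inflateFun.injective σ.injective injOn_inflateFun_preimage

@[simp]
theorem coe_inflate : ⇑(σ.inflate v β) = inflateFun σ v β := rfl

theorem clusterAt_inflate : ClusterAt (L + 1) (v + 1) (σ.symm v + 1) (σ.inflate v β) := by
  ext x
  simp only [Finset.mem_image, Finset.mem_filter, Finset.mem_univ, true_and, Finset.mem_Ico,
    coe_inflate]
  constructor
  · rintro ⟨i, ⟨hi₁, hi₂⟩, rfl⟩
    rw [inflateFun_of_le_of_le (by omega) (by omega)]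
    omega
  · rintro ⟨hx₁, hx₂⟩
    set t := β.symm ⟨x - 1 - v, by omega⟩
    refine ⟨⟨σ.symm v + t, by omega⟩, ⟨by simp, by simp; omega⟩, ?_⟩
    rw [inflateFun_add, apply_symm_apply]
    dsimp only
    omega

theorem inflate_injective (v : Fin N) :
    Injective fun q : Perm (Fin N) × Perm (Fin (L + 1)) => q.1.inflate v q.2 := by
  rintro ⟨σ₁, β₁⟩ ⟨σ₂, β₂⟩ h
  have happ (i : Fin (N + L)) : inflateFun σ₁ v β₁ i = inflateFun σ₂ v β₂ i := by
    simpa using congrArg (· i) h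
  have hslot (i : Fin (N + L)) : σ₁ (Fin.collapseBlock (σ₁.symm v) L i) =
      σ₂ (Fin.collapseBlock (σ₂.symm v) L i) :=
    Fin.ext <| eq_of_mem_valueSlot (inflateFun_mem_valueSlot i)
      (by rw [happ]; exact inflateFun_mem_valueSlot i)
  have hblock (i : Fin (N + L)) : ((σ₁.symm v : ℕ) ≤ i ∧ (i : ℕ) ≤ σ₁.symm v + L) ↔
      ((σ₂.symm v : ℕ) ≤ i ∧ (i : ℕ) ≤ σ₂.symm v + L) := by
    rw [← Fin.collapseBlock_eq_iff, ← Fin.collapseBlock_eq_iff, eq_symm_apply σ₁, eq_symm_apply σ₂,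
      hslot]
  have hp : σ₁.symm v = σ₂.symm v := by
    have h₁ := (hblock ⟨σ₁.symm v, by omega⟩).1 (by simp)
    have h₂ := (hblock ⟨σ₂.symm v, by omega⟩).2 (by simp)
    ext
    simp only at h₁ h₂
    omega
  have hσ : σ₁ = σ₂ := by
    ext1 a
    obtain ⟨i, rfl⟩ := Fin.collapseBlock_surjective (σ₁.symm v) L a
    rw [hslot, hp]
  subst hσ
  refine Prod.ext rfl (ext fun t => Fin.ext ?_)
  have := congrArg Fin.val (happ ⟨σ₁.symm v + t, by omega⟩)
  rw [inflateFun_add, inflateFun_add] at this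
  dsimp only
  omega

theorem avoids_inflate {m : ℕ} {τ : Perm (Fin m)} (hβ : StrictMono β ∨ StrictAnti β)
    (h12 : ¬ ContainsTightly12 τ) (h21 : ¬ ContainsTightly21 τ) (hσ : Avoids σ τ) :
    Avoids (σ.inflate v β) τ :=
  isInflation_inflateFun.avoids (strictMonoOn_or_strictAntiOn_inflateFun hβ) h12 h21 hσ

end Equiv.Perm

theorem two_mul_ncard_avoidSet_le_ncard_clusterEvent_inter {N L m : ℕ} (hL : 1 ≤ L) (v : Fin N)
    {τ : Equiv.Perm (Fin m)} (h12 : ¬ ContainsTightly12 τ) (h21 : ¬ ContainsTightly21 τ) :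
    2 * (AvoidSet N τ).ncard ≤
      (ClusterEvent (N + L) (L + 1) (v + 1) ∩ AvoidSet (N + L) τ).ncard := by
  set runs : Set (Equiv.Perm (Fin (L + 1))) := {1, Fin.revPerm}
  have hruns : runs.ncard = 2 := Set.ncard_pair fun h => by
    have : L = 0 := by simpa [Fin.ext_iff] using (congrArg (· 0) h).symm
    omega
  have hmaps : Set.MapsTo (fun q => q.1.inflate v q.2) (AvoidSet N τ ×ˢ runs)
      (ClusterEvent (N + L) (L + 1) (v + 1) ∩ AvoidSet (N + L) τ) := by
    rintro ⟨σ, β⟩ ⟨hσ, hβ⟩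
    have hmono : StrictMono β ∨ StrictAnti β := by
      rcases hβ with rfl | rfl
      · exact Or.inl strictMono_id
      · exact Or.inr Fin.rev_strictAnti
    exact ⟨⟨σ.symm v + 1, by omega, by omega, Equiv.Perm.clusterAt_inflate⟩,
      Equiv.Perm.avoids_inflate hmono h12 h21 hσ⟩
  calc 2 * (AvoidSet N τ).ncard = (AvoidSet N τ ×ˢ runs).ncard := by
        rw [Set.ncard_prod, hruns, mul_comm]
    _ = ((fun q => q.1.inflate v q.2) '' (AvoidSet N τ ×ˢ runs)).ncard :=
        (Set.ncard_image_of_injective _ (Equiv.Perm.inflate_injective v)).symm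
    _ ≤ _ := Set.ncard_le_ncard hmaps.image_subset

theorem avoid_cluster_lower_bound_two_general (m : ℕ) (τ : Equiv.Perm (Fin m))
    (hτ12 : ¬ ContainsTightly12 τ) (hτ21 : ¬ ContainsTightly21 τ)
    (n : ℕ) (l : ℕ) (hl2 : 2 ≤ l) (hln : l ≤ n - 1)
    (k : ℕ) (hk1 : 1 ≤ k) (hk2 : k ≤ n - l + 1) :
    2 * (AvoidSet (n - l + 1) τ).ncard ≤ (ClusterEvent n l k ∩ AvoidSet n τ).ncard ∧
    (2 * (AvoidSet (n - l + 1) τ).ncard : ℝ) / ((AvoidSet n τ).ncard : ℝ) ≤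
      ((ClusterEvent n l k ∩ AvoidSet n τ).ncard : ℝ) / ((AvoidSet n τ).ncard : ℝ) := by
  obtain ⟨L, rfl⟩ : ∃ L, l = L + 1 := ⟨l - 1, by omega⟩
  obtain ⟨N, rfl⟩ : ∃ N, n = N + L := ⟨n - L, by omega⟩
  obtain ⟨v, rfl⟩ : ∃ v : Fin N, k = v + 1 := ⟨⟨k - 1, by omega⟩, by simp only; omega⟩
  rw [show N + L - (L + 1) + 1 = N by omega]
  have hcount := two_mul_ncard_avoidSet_le_ncard_clusterEvent_inter (L := L) (by omega) v hτ12 hτ21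
  exact ⟨hcount, div_le_div_of_nonneg_right (by exact_mod_cast hcount) (Nat.cast_nonneg _)⟩

/-- lower bound with factor 2 when `τ` contains tightly neither 12 nor 21. -/
theorem avoid_cluster_lower_bound_two (m : ℕ) (hm : 2 ≤ m) (τ : Equiv.Perm (Fin m))
    (hτ12 : ¬ ContainsTightly12 τ) (hτ21 : ¬ ContainsTightly21 τ)
    (n : ℕ) (hn : 3 ≤ n) (l : ℕ) (hl2 : 2 ≤ l) (hln : l ≤ n - 1)
    (k : ℕ) (hk1 : 1 ≤ k) (hk2 : k ≤ n - l + 1) :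
    2 * (AvoidSet (n - l + 1) τ).ncard ≤ (ClusterEvent n l k ∩ AvoidSet n τ).ncard ∧
    (2 * (AvoidSet (n - l + 1) τ).ncard : ℝ) / ((AvoidSet n τ).ncard : ℝ) ≤
      ((ClusterEvent n l k ∩ AvoidSet n τ).ncard : ℝ) / ((AvoidSet n τ).ncard : ℝ) :=
  avoid_cluster_lower_bound_two_general m τ hτ12 hτ21 n l hl2 hln k hk1 hk2
end

section
/- Let m ≥ 2, let τ ∈ S_m be cluster-free, and suppose that the ratios |S_{n+1}(τ)|/|S_n(τ)| converge as n → ∞ to a limit L > 0. Fix l ≥ 2 and let {k_n} be any sequence with 1 ≤ k_n ≤ n-l+1. Then lim_{n→∞} |A^{(n)}_{l;k_n} ∩ S_n(τ)| / |S_n(τ)| = |S_l(τ)| / L^{l-1}. -/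
open Filter

-- lift function
def liftv (c d v : ℕ) : ℕ := if v ≤ c then v else v + (d+1)

lemma liftv_strictMono (c d : ℕ) : StrictMono (liftv c d) := by
  intro x y h
  unfold liftv
  split_ifs <;> omega

lemma liftv_lt_iff (c d : ℕ) {x y : ℕ} : liftv c d x < liftv c d y ↔ x < y :=
  (liftv_strictMono c d).lt_iff_lt

lemma liftv_out_lo {c d v : ℕ} (h : v ≤ c) : liftv c d v = v := by
  unfold liftv; rw [if_pos h]

lemma liftv_out_hi {c d v : ℕ} (h : c < v) : liftv c d v = v + (d+1) := by
  unfold liftv; rw [if_neg (by omega)]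

lemma liftv_ne (c d : ℕ) {v : ℕ} (h : v ≠ c) : liftv c d v < c ∨ c + d + 1 < liftv c d v := by
  unfold liftv; split_ifs <;> omega

section Construction

variable {M d : ℕ}

/-- window start (0-indexed). -/
def wstart (cf : Fin (M+1)) (π : Equiv.Perm (Fin (M+1))) : ℕ :=
  ((π.symm cf : Fin (M+1)) : ℕ)

lemma wstart_le (cf : Fin (M+1)) (π : Equiv.Perm (Fin (M+1))) : wstart cf π ≤ M :=
  Nat.lt_succ_iff.mp (π.symm cf).isLt

/-- the expanded function, as a `ℕ`-valued function. -/
def Ffun (cf : Fin (M+1)) (π : Equiv.Perm (Fin (M+1))) (w : Equiv.Perm (Fin (d+2)))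
    (i : Fin (M+d+2)) : ℕ :=
  if h : (i : ℕ) < wstart cf π then
    liftv cf d (π ⟨i, by have := wstart_le cf π; omega⟩)
  else if h2 : (i : ℕ) < wstart cf π + (d+2) then
    (cf : ℕ) + (w ⟨(i : ℕ) - wstart cf π, by omega⟩ : ℕ)
  else
    liftv cf d (π ⟨(i : ℕ) - (d+1), by omega⟩)


variable (cf : Fin (M+1)) (π : Equiv.Perm (Fin (M+1))) (w : Equiv.Perm (Fin (d+2)))

lemma pi_wstart : (π ⟨wstart cf π, by have := wstart_le cf π; omega⟩ : ℕ) = (cf : ℕ) := by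
  have : (⟨wstart cf π, by have := wstart_le cf π; omega⟩ : Fin (M+1)) = π.symm cf := rfl
  rw [this, Equiv.apply_symm_apply]

lemma Ffun_lo {i : Fin (M+d+2)} (h : (i:ℕ) < wstart cf π) :
    Ffun cf π w i = liftv cf d (π ⟨i, by have := wstart_le cf π; omega⟩) := by
  unfold Ffun; rw [dif_pos h]

lemma Ffun_win {i : Fin (M+d+2)} (h1 : wstart cf π ≤ (i:ℕ)) (h2 : (i:ℕ) < wstart cf π + (d+2)) :
    Ffun cf π w i = (cf : ℕ) + (w ⟨(i:ℕ) - wstart cf π, by omega⟩ : ℕ) := by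
  unfold Ffun; rw [dif_neg (by omega), dif_pos h2]

lemma Ffun_hi {i : Fin (M+d+2)} (h : wstart cf π + (d+2) ≤ (i:ℕ)) :
    Ffun cf π w i = liftv cf d (π ⟨(i:ℕ) - (d+1), by omega⟩) := by
  unfold Ffun; rw [dif_neg (by omega), dif_neg (by omega)]

/-- collapsed position associated to an out-of-window position. -/
def cpos {i : Fin (M+d+2)} (h : (i:ℕ) < wstart cf π ∨ wstart cf π + (d+2) ≤ (i:ℕ)) :
    Fin (M+1) :=
  if h' : (i:ℕ) < wstart cf π then ⟨i, by have := wstart_le cf π; omega⟩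
  else ⟨(i:ℕ) - (d+1), by omega⟩

lemma cpos_ne {i : Fin (M+d+2)} (h : (i:ℕ) < wstart cf π ∨ wstart cf π + (d+2) ≤ (i:ℕ)) :
    ((cpos cf π h : Fin (M+1)) : ℕ) ≠ wstart cf π := by
  unfold cpos; split_ifs with h' <;> simp <;> omega

lemma Ffun_out {i : Fin (M+d+2)} (h : (i:ℕ) < wstart cf π ∨ wstart cf π + (d+2) ≤ (i:ℕ)) :
    Ffun cf π w i = liftv cf d (π (cpos cf π h)) := by
  rcases h with h | h
  · rw [Ffun_lo cf π w h]; unfold cpos; rw [dif_pos h]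
  · rw [Ffun_hi cf π w h]; unfold cpos; rw [dif_neg (by omega)]

lemma pi_cpos_ne {i : Fin (M+d+2)} (h : (i:ℕ) < wstart cf π ∨ wstart cf π + (d+2) ≤ (i:ℕ)) :
    ((π (cpos cf π h) : Fin (M+1)) : ℕ) ≠ (cf : ℕ) := by
  intro hc
  have : π (cpos cf π h) = cf := Fin.ext hc
  have h2 : π.symm cf = cpos cf π h := (Equiv.symm_apply_eq π).mpr this.symm
  exact cpos_ne cf π h (by unfold wstart; rw [h2])

lemma Ffun_out_range {i : Fin (M+d+2)} (h : (i:ℕ) < wstart cf π ∨ wstart cf π + (d+2) ≤ (i:ℕ)) :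
    Ffun cf π w i < (cf:ℕ) ∨ (cf:ℕ) + d + 1 < Ffun cf π w i := by
  rw [Ffun_out cf π w h]
  exact liftv_ne cf d (pi_cpos_ne cf π h)

lemma Ffun_win_range {i : Fin (M+d+2)} (h1 : wstart cf π ≤ (i:ℕ))
    (h2 : (i:ℕ) < wstart cf π + (d+2)) :
    (cf:ℕ) ≤ Ffun cf π w i ∧ Ffun cf π w i ≤ (cf:ℕ) + d + 1 := by
  rw [Ffun_win cf π w h1 h2]
  have := (w ⟨(i:ℕ) - wstart cf π, by omega⟩).isLt
  omega

lemma Ffun_lt (i : Fin (M+d+2)) : Ffun cf π w i < M + d + 2 := by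
  by_cases h1 : (i:ℕ) < wstart cf π
  · rw [Ffun_lo cf π w h1]
    have hb : ((π ⟨i, by have := wstart_le cf π; omega⟩ : Fin (M+1)) : ℕ) ≤ M :=
      Nat.lt_succ_iff.mp (π _).isLt
    unfold liftv; split_ifs <;> omega
  · by_cases h2 : (i:ℕ) < wstart cf π + (d+2)
    · rw [Ffun_win cf π w (by omega) h2]
      have := wstart_le cf π
      have := (w ⟨(i:ℕ) - wstart cf π, by omega⟩).isLt
      have hc : (cf:ℕ) ≤ M := Nat.lt_succ_iff.mp cf.isLt
      omega
    · rw [Ffun_hi cf π w (by omega)]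
      have hb : ((π ⟨(i:ℕ) - (d+1), by omega⟩ : Fin (M+1)) : ℕ) ≤ M :=
        Nat.lt_succ_iff.mp (π _).isLt
      unfold liftv; split_ifs <;> omega

lemma Ffun_injective : Function.Injective
    (fun i : Fin (M+d+2) => (⟨Ffun cf π w i, Ffun_lt cf π w i⟩ : Fin (M+d+2))) := by
  intro i i' he
  have he' : Ffun cf π w i = Ffun cf π w i' := congrArg Fin.val he
  set a := wstart cf π with ha
  by_cases h1 : wstart cf π ≤ (i:ℕ) ∧ (i:ℕ) < wstart cf π + (d+2)
  · by_cases h1' : wstart cf π ≤ (i':ℕ) ∧ (i':ℕ) < wstart cf π + (d+2)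
    · -- both in window
      rw [Ffun_win cf π w h1.1 h1.2, Ffun_win cf π w h1'.1 h1'.2] at he'
      have : w ⟨(i:ℕ) - wstart cf π, by omega⟩ = w ⟨(i':ℕ) - wstart cf π, by omega⟩ :=
        Fin.ext (by omega)
      have := w.injective this
      have := congrArg Fin.val this
      simp only at this
      exact Fin.ext (by omega)
    · exfalso
      have hr := Ffun_out_range cf π w (i := i') (by omega)
      have hw := Ffun_win_range cf π w h1.1 h1.2
      omega
  · by_cases h1' : wstart cf π ≤ (i':ℕ) ∧ (i':ℕ) < wstart cf π + (d+2)
    · exfalso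
      have hr := Ffun_out_range cf π w (i := i) (by omega)
      have hw := Ffun_win_range cf π w h1'.1 h1'.2
      omega
    · -- both out
      have hi : (i:ℕ) < wstart cf π ∨ wstart cf π + (d+2) ≤ (i:ℕ) := by omega
      have hi' : (i':ℕ) < wstart cf π ∨ wstart cf π + (d+2) ≤ (i':ℕ) := by omega
      rw [Ffun_out cf π w hi, Ffun_out cf π w hi'] at he'
      have := Fin.ext ((liftv_strictMono (cf:ℕ) d).injective he')
      have := π.injective this
      have hv := congrArg Fin.val this
      unfold cpos at hv
      split_ifs at hv <;> (simp only at hv) <;> (apply Fin.ext) <;> omega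

/-- the expanded permutation. -/
noncomputable def Fperm : Equiv.Perm (Fin (M+d+2)) :=
  Equiv.ofBijective _ ((Finite.injective_iff_bijective).mp (Ffun_injective cf π w))

lemma Fperm_val (i : Fin (M+d+2)) : ((Fperm cf π w i : Fin (M+d+2)) : ℕ) = Ffun cf π w i := rfl


lemma contains_w {m : ℕ} (τ : Equiv.Perm (Fin m))
    (h : Contains ⇑w ⇑τ) : Contains ⇑(Fperm cf π w) ⇑τ := by
  obtain ⟨f, hf, hiff⟩ := h
  have ha := wstart_le cf π
  refine ⟨fun j => ⟨wstart cf π + f j, by have := (f j).isLt; omega⟩, ?_, ?_⟩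
  · intro x y hxy
    have := hf hxy
    rw [Fin.lt_def] at this ⊢
    simp only
    omega
  · intro j j'
    rw [← hiff j j', Fin.lt_def, Fin.lt_def]
    have e : ∀ x : Fin m, ((Fperm cf π w ⟨wstart cf π + f x, by have := (f x).isLt; omega⟩ : Fin (M+d+2)) : ℕ)
        = (cf : ℕ) + (w (f x) : ℕ) := by
      intro x
      rw [Fperm_val, Ffun_win cf π w (by simp) (by simp only [Fin.val_mk]; have := (f x).isLt; omega)]
      congr 2
      apply Fin.ext
      simp
    rw [e j, e j']
    omega

/-- the position-expansion map sending collapsed positions to expanded positions. -/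
def gmap (p : ℕ) : ℕ :=
  if p < wstart cf π then p
  else if p = wstart cf π then wstart cf π + ((w.symm (⟨0, by omega⟩ : Fin (d+2)) : Fin (d+2)) : ℕ)
  else p + (d+1)

lemma gmap_lt {p : ℕ} (hp : p ≤ M) : gmap cf π w p < M + d + 2 := by
  have hb := (w.symm (⟨0, by omega⟩ : Fin (d+2))).isLt
  have := wstart_le cf π
  unfold gmap; split_ifs <;> omega

lemma gmap_strictMono {p p' : ℕ} (h : p < p') : gmap cf π w p < gmap cf π w p' := by
  have hb := (w.symm (⟨0, by omega⟩ : Fin (d+2))).isLt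
  unfold gmap; split_ifs <;> omega

lemma Ffun_gmap (p : Fin (M+1)) (i : Fin (M+d+2)) (hi : (i:ℕ) = gmap cf π w p) :
    Ffun cf π w i = liftv cf d (π p) := by
  have ha := wstart_le cf π
  have hb := (w.symm (⟨0, by omega⟩ : Fin (d+2))).isLt
  rcases lt_trichotomy (p : ℕ) (wstart cf π) with h | h | h
  · have hg : (i:ℕ) = (p : ℕ) := by rw [hi]; unfold gmap; rw [if_pos h]
    rw [Ffun_lo cf π w (by omega)]
    exact congrArg _ (congrArg Fin.val (congrArg π (Fin.ext hg)))
  · have hg : (i:ℕ) = wstart cf π + ((w.symm (⟨0, by omega⟩ : Fin (d+2)) : Fin (d+2)) : ℕ) := by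
      rw [hi]; unfold gmap; rw [if_neg (by omega), if_pos h]
    rw [Ffun_win cf π w (by omega) (by omega)]
    have e1 : (⟨(i : ℕ) - wstart cf π, by omega⟩ : Fin (d+2))
        = w.symm (⟨0, by omega⟩ : Fin (d+2)) := Fin.ext (by simp [hg])
    rw [e1, Equiv.apply_symm_apply]
    have e3 : π p = cf := by
      rw [show p = π.symm cf from Fin.ext h]
      exact Equiv.apply_symm_apply π cf
    rw [e3, liftv_out_lo (le_refl _)]
    simp
  · have hg : (i:ℕ) = (p : ℕ) + (d+1) := by
      rw [hi]; unfold gmap; rw [if_neg (by omega), if_neg (by omega)]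
    rw [Ffun_hi cf π w (by omega)]
    exact congrArg _ (congrArg Fin.val (congrArg π (Fin.ext (by simp [hg]))))

lemma Fperm_gmap (p : Fin (M+1)) :
    ((Fperm cf π w ⟨gmap cf π w p, gmap_lt cf π w (Nat.lt_succ_iff.mp p.isLt)⟩ : Fin (M+d+2)) : ℕ)
      = liftv cf d (π p) := by
  rw [Fperm_val]
  exact Ffun_gmap cf π w p _ rfl

lemma contains_pi {m : ℕ} (τ : Equiv.Perm (Fin m))
    (h : Contains ⇑π ⇑τ) : Contains ⇑(Fperm cf π w) ⇑τ := by
  obtain ⟨f, hf, hiff⟩ := h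
  refine ⟨fun j => ⟨gmap cf π w (f j), gmap_lt cf π w (Nat.lt_succ_iff.mp (f j).isLt)⟩, ?_, ?_⟩
  · intro x y hxy
    rw [Fin.lt_def]
    exact gmap_strictMono cf π w (hf hxy)
  · intro j j'
    rw [← hiff j j', Fin.lt_def, Fin.lt_def, Fperm_gmap, Fperm_gmap, liftv_lt_iff]


/-- collapse map on positions. -/
def clpf (a d p : ℕ) : ℕ :=
  if p < a then p else if p < a + (d+2) then a else p - (d+1)

lemma liftv_cmp {c d v : ℕ} (h : v ≠ c) :
    (v < c ∧ liftv c d v < c) ∨ (c < v ∧ c + d + 1 < liftv c d v) := by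
  unfold liftv; split_ifs <;> omega


lemma clp_le {p : ℕ} (hp : p < M+d+2) : clpf (wstart cf π) d p ≤ M := by
  have := wstart_le cf π
  unfold clpf; split_ifs <;> omega

lemma Ffun_out' {i : Fin (M+d+2)} (h : (i:ℕ) < wstart cf π ∨ wstart cf π + (d+2) ≤ (i:ℕ)) :
    Ffun cf π w i = liftv cf d (π ⟨clpf (wstart cf π) d i, Nat.lt_succ_iff.mpr (clp_le cf π i.isLt)⟩)
    ∧ ((π ⟨clpf (wstart cf π) d i, Nat.lt_succ_iff.mpr (clp_le cf π i.isLt)⟩ : Fin (M+1)) : ℕ) ≠ (cf : ℕ) := by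
  have he : (⟨clpf (wstart cf π) d i, Nat.lt_succ_iff.mpr (clp_le cf π i.isLt)⟩ : Fin (M+1)) = cpos cf π h := by
    apply Fin.ext
    unfold cpos
    rcases h with h | h
    · rw [dif_pos h]
      simp only [Fin.val_mk]
      unfold clpf
      rw [if_pos h]
    · rw [dif_neg (by omega)]
      simp only [Fin.val_mk]
      unfold clpf
      rw [if_neg (by omega), if_neg (by omega)]
  rw [he]
  exact ⟨Ffun_out cf π w h, pi_cpos_ne cf π h⟩

lemma clp_win {p : ℕ} (h1 : wstart cf π ≤ p) (h2 : p < wstart cf π + (d+2)) :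
    clpf (wstart cf π) d p = wstart cf π := by
  unfold clpf; rw [if_neg (by omega), if_pos h2]

/-- a finset closed under betweenness is the interval from its min to its max. -/
lemma finset_interval {m : ℕ} (S : Finset (Fin m)) (hne : S.Nonempty)
    (hb : ∀ x ∈ S, ∀ y ∈ S, ∀ z : Fin m, x ≤ z → z ≤ y → z ∈ S) :
    ∀ z : Fin m, z ∈ S ↔ S.min' hne ≤ z ∧ z ≤ S.max' hne := by
  intro z
  constructor
  · exact fun h => ⟨S.min'_le z h, S.le_max' z h⟩
  · rintro ⟨h1, h2⟩
    exact hb _ (S.min'_mem hne) _ (S.max'_mem hne) z h1 h2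

lemma finset_interval_card {m : ℕ} (S : Finset (Fin m)) (hne : S.Nonempty)
    (hb : ∀ x ∈ S, ∀ y ∈ S, ∀ z : Fin m, x ≤ z → z ≤ y → z ∈ S) :
    ((S.max' hne : Fin m) : ℕ) + 1 = ((S.min' hne : Fin m) : ℕ) + S.card := by
  have hS : S = Finset.Icc (S.min' hne) (S.max' hne) := by
    ext z
    rw [finset_interval S hne hb z, Finset.mem_Icc]
  have hmm : S.min' hne ≤ S.max' hne := S.min'_le _ (S.max'_mem hne)
  rw [Fin.le_def] at hmm
  have hcard := congrArg Finset.card hS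
  rw [Fin.card_Icc] at hcard
  omega


lemma contains_split {m : ℕ} (τ : Equiv.Perm (Fin m)) (hcf : ClusterFree τ)
    (h : Contains ⇑(Fperm cf π w) ⇑τ) :
    Contains ⇑π ⇑τ ∨ Contains ⇑w ⇑τ := by
  classical
  obtain ⟨f, hf, hiff⟩ := h
  have ha := wstart_le cf π
  set a := wstart cf π with ha_def
  set T : Finset (Fin m) := Finset.univ.filter
      (fun j => a ≤ ((f j : Fin (M+d+2)) : ℕ) ∧ ((f j : Fin (M+d+2)) : ℕ) < a + (d+2)) with hT
  have hmemT : ∀ j, j ∈ T ↔ (a ≤ ((f j : Fin (M+d+2)) : ℕ) ∧ ((f j : Fin (M+d+2)) : ℕ) < a + (d+2)) := by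
    intro j; simp [hT]
  by_cases hall : ∀ j, j ∈ T
  · -- all inside the window : pattern occurs in w
    right
    have hbnd : ∀ j, ((f j : Fin (M+d+2)) : ℕ) - a < d + 2 := by
      intro j; have := (hmemT j).mp (hall j); omega
    refine ⟨fun j => ⟨((f j : Fin (M+d+2)) : ℕ) - a, hbnd j⟩, ?_, ?_⟩
    · intro x y hxy
      have hx := (hmemT x).mp (hall x)
      have := hf hxy
      rw [Fin.lt_def] at this ⊢
      simp only [Fin.val_mk]
      omega
    · intro j j'
      rw [← hiff j j']
      have e : ∀ x, ((Fperm cf π w (f x) : Fin (M+d+2)) : ℕ)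
          = (cf : ℕ) + (w ⟨((f x : Fin (M+d+2)) : ℕ) - a, hbnd x⟩ : ℕ) := by
        intro x
        have hx := (hmemT x).mp (hall x)
        rw [Fperm_val, Ffun_win cf π w hx.1 hx.2]
      simp only [Fin.lt_def, e]
      omega
  · by_cases hcard : T.card ≤ 1
    · -- at most one inside the window : pattern occurs in π
      left
      have hclp : ∀ j, clpf a d ((f j : Fin (M+d+2)) : ℕ) < M + 1 :=
        fun j => Nat.lt_succ_iff.mpr (clp_le cf π (f j).isLt)
      set g : Fin m → Fin (M+1) := fun j => ⟨clpf a d ((f j : Fin (M+d+2)) : ℕ), hclp j⟩ with hg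
      have hone : ∀ x ∈ T, ∀ y ∈ T, x = y := Finset.card_le_one.mp hcard
      -- value facts
      have hval : ∀ j, (j ∈ T ∧ ((π (g j) : Fin (M+1)) : ℕ) = (cf:ℕ)
            ∧ (cf:ℕ) ≤ ((Fperm cf π w (f j) : Fin (M+d+2)) : ℕ)
            ∧ ((Fperm cf π w (f j) : Fin (M+d+2)) : ℕ) ≤ (cf:ℕ) + d + 1)
          ∨ (j ∉ T ∧ ((π (g j) : Fin (M+1)) : ℕ) ≠ (cf:ℕ)
            ∧ ((Fperm cf π w (f j) : Fin (M+d+2)) : ℕ) = liftv cf d (π (g j))) := by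
        intro j
        by_cases hj : j ∈ T
        · left
          refine ⟨hj, ?_, ?_⟩
          · have hw := (hmemT j).mp hj
            have e1 : g j = ⟨a, by omega⟩ := Fin.ext (clp_win cf π hw.1 hw.2)
            rw [e1]
            exact pi_wstart cf π
          · have hw := (hmemT j).mp hj
            rw [Fperm_val]
            have := Ffun_win_range cf π w hw.1 hw.2
            omega
        · right
          have hw : ((f j : Fin (M+d+2)) : ℕ) < a ∨ a + (d+2) ≤ ((f j : Fin (M+d+2)) : ℕ) := by
            have := (hmemT j).not.mp hj
            omega
          obtain ⟨e1, e2⟩ := Ffun_out' cf π w (i := f j) hw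
          have eg : g j = ⟨clpf a d ((f j : Fin (M+d+2)) : ℕ),
              Nat.lt_succ_iff.mpr (clp_le cf π (f j).isLt)⟩ := Fin.ext rfl
          rw [Fperm_val, eg]
          exact ⟨hj, e2, e1⟩
      refine ⟨g, ?_, ?_⟩
      · intro x y hxy
        have hfxy := hf hxy
        rw [Fin.lt_def] at hfxy ⊢
        have hnb : ¬(x ∈ T ∧ y ∈ T) := by
          rintro ⟨h1, h2⟩
          exact absurd (hone x h1 y h2) (ne_of_lt hxy)
        rw [hmemT x, hmemT y] at hnb
        simp only [hg, Fin.val_mk]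
        unfold clpf
        split_ifs <;> omega
      · intro j j'
        by_cases hjj : j = j'
        · subst hjj; simp
        rcases hval j with ⟨hj, e1, e2, e3⟩ | ⟨hj, e1, e2⟩ <;>
          rcases hval j' with ⟨hj', e1', e2', e3'⟩ | ⟨hj', e1', e2'⟩
        · exact absurd (hone j hj j' hj') hjj
        · have := liftv_cmp (v := ((π (g j') : Fin (M+1)) : ℕ)) (d := d) e1'
          rw [← hiff j j']
          simp only [Fin.lt_def]
          rw [e2']
          omega
        · have := liftv_cmp (v := ((π (g j) : Fin (M+1)) : ℕ)) (d := d) e1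
          rw [← hiff j j']
          simp only [Fin.lt_def]
          rw [e2]
          omega
        · have c1 := liftv_cmp (v := ((π (g j) : Fin (M+1)) : ℕ)) (d := d) e1
          have c2 := liftv_cmp (v := ((π (g j') : Fin (M+1)) : ℕ)) (d := d) e1'
          rw [← hiff j j']
          simp only [Fin.lt_def]
          rw [e2, e2']
          unfold liftv
          split_ifs <;> omega
    · -- middle case : contradiction with cluster-freeness
      exfalso
      have h2 : 2 ≤ T.card := by omega
      have hne : T.Nonempty := Finset.card_pos.mp (by omega)
      have hltm : T.card < m := by
        rcases lt_or_eq_of_le (le_trans (Finset.card_le_card (Finset.subset_univ T))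
          (le_of_eq (Finset.card_univ.trans (Fintype.card_fin m)))) with h | h
        · exact h
        · exfalso
          apply hall
          intro j
          have : T = Finset.univ := Finset.eq_univ_of_card T (h.trans (Fintype.card_fin m).symm)
          rw [this]; exact Finset.mem_univ j
      -- betweenness of T
      have hbT : ∀ x ∈ T, ∀ y ∈ T, ∀ z : Fin m, x ≤ z → z ≤ y → z ∈ T := by
        intro x hx y hy z h1 h2
        rw [hmemT] at hx hy ⊢
        have l1 : ((f x : Fin (M+d+2)) : ℕ) ≤ ((f z : Fin (M+d+2)) : ℕ) := hf.monotone h1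
        have l2 : ((f z : Fin (M+d+2)) : ℕ) ≤ ((f y : Fin (M+d+2)) : ℕ) := hf.monotone h2
        omega
      -- betweenness of V
      set V : Finset (Fin m) := T.image (fun j => τ j) with hV
      have hcardV : V.card = T.card := Finset.card_image_of_injective T τ.injective
      have hneV : V.Nonempty := hne.image _
      have hbV : ∀ x ∈ V, ∀ y ∈ V, ∀ z : Fin m, x ≤ z → z ≤ y → z ∈ V := by
        intro u hu v hv z h1 h2
        obtain ⟨x, hx, hux⟩ := Finset.mem_image.mp hu
        obtain ⟨y, hy, hvy⟩ := Finset.mem_image.mp hv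
        subst hux hvy
        set j'' := τ.symm z with hj''
        have hzz : τ j'' = z := Equiv.apply_symm_apply τ z
        by_cases hmem : j'' ∈ T
        · exact Finset.mem_image.mpr ⟨j'', hmem, hzz⟩
        exfalso
        rcases eq_or_lt_of_le h1 with he | h1'
        · exact hmem (by rwa [show j'' = x from τ.injective (by rw [hzz, ← he])])
        rcases eq_or_lt_of_le h2 with he | h2'
        · exact hmem (by rwa [show j'' = y from τ.injective (by rw [hzz, he])])
        rw [← hzz] at h1' h2'
        have s1 : Fperm cf π w (f x) < Fperm cf π w (f j'') := (hiff x j'').mpr h1'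
        have s2 : Fperm cf π w (f j'') < Fperm cf π w (f y) := (hiff j'' y).mpr h2'
        have hwx := (hmemT x).mp hx
        have hwy := (hmemT y).mp hy
        have hrx := Ffun_win_range cf π w hwx.1 hwx.2
        have hry := Ffun_win_range cf π w hwy.1 hwy.2
        have hout : ((f j'' : Fin (M+d+2)) : ℕ) < a ∨ a + (d+2) ≤ ((f j'' : Fin (M+d+2)) : ℕ) := by
          have := (hmemT j'').not.mp hmem; omega
        have hro := Ffun_out_range cf π w hout
        rw [Fin.lt_def] at s1 s2
        rw [Fperm_val, Fperm_val] at s1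
        rw [Fperm_val, Fperm_val] at s2
        omega
      -- intervals
      set j₀ := T.min' hne with hj₀
      set j₁ := T.max' hne with hj₁
      set v₀ := V.min' hneV with hv₀
      set v₁ := V.max' hneV with hv₁
      have hcT := finset_interval_card T hne hbT
      have hcV := finset_interval_card V hneV hbV
      rw [hcardV] at hcV
      -- apply cluster-freeness
      apply hcf T.card ((j₀ : ℕ) + 1) ((v₀ : ℕ) + 1) h2 (by omega) (by omega)
        (by have := (T.max' hne).isLt; omega)
      unfold ClusterAt
      have hfilter : (Finset.univ.filter fun i : Fin m =>
          (j₀ : ℕ) + 1 ≤ (i : ℕ) + 1 ∧ (i : ℕ) + 1 < (j₀ : ℕ) + 1 + T.card) = T := by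
        ext i
        rw [Finset.mem_filter]
        rw [finset_interval T hne hbT i]
        simp only [Finset.mem_univ, true_and, Fin.le_def]
        omega
      rw [hfilter]
      ext y
      simp only [Finset.mem_image, Finset.mem_Ico]
      constructor
      · rintro ⟨i, hi, rfl⟩
        have hiV : τ i ∈ V := Finset.mem_image.mpr ⟨i, hi, rfl⟩
        have := (finset_interval V hneV hbV (τ i)).mp hiV
        rw [Fin.le_def, Fin.le_def] at this
        omega
      · rintro ⟨hy1, hy2⟩
        have hyv : y - 1 < m := by have := (V.max' hneV).isLt; omega
        have hzV : (⟨y - 1, hyv⟩ : Fin m) ∈ V := by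
          rw [finset_interval V hneV hbV]
          rw [Fin.le_def, Fin.le_def]
          simp only [Fin.val_mk]
          omega
        obtain ⟨i, hi, hti⟩ := Finset.mem_image.mp hzV
        refine ⟨i, hi, ?_⟩
        have := congrArg Fin.val hti
        simp only [Fin.val_mk] at this
        omega


lemma Ffun_eq_of_eq {π' : Equiv.Perm (Fin (M+1))} {w' : Equiv.Perm (Fin (d+2))}
    (h : Fperm cf π w = Fperm cf π' w') (i : Fin (M+d+2)) :
    Ffun cf π w i = Ffun cf π' w' i := by
  have h2 : Fperm cf π w i = Fperm cf π' w' i := by rw [h]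
  rw [← Fperm_val cf π w i, ← Fperm_val cf π' w' i, h2]

lemma Fperm_clusterAt : ClusterAt (d+2) ((cf:ℕ)+1) (wstart cf π + 1) (Fperm cf π w) := by
  have ha := wstart_le cf π
  unfold ClusterAt
  ext y
  simp only [Finset.mem_image, Finset.mem_filter, Finset.mem_univ, true_and, Finset.mem_Ico]
  constructor
  · rintro ⟨i, ⟨hi1, hi2⟩, rfl⟩
    have := Ffun_win_range cf π w (i := i) (by omega) (by omega)
    rw [Fperm_val]
    omega
  · rintro ⟨hy1, hy2⟩
    have hyb : y - 1 - (cf:ℕ) < d + 2 := by omega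
    set b := w.symm ⟨y - 1 - (cf:ℕ), hyb⟩ with hb
    have hbl := b.isLt
    have hil : wstart cf π + (b:ℕ) < M + d + 2 := by omega
    refine ⟨⟨wstart cf π + (b:ℕ), hil⟩, ⟨by simp only [Fin.val_mk]; omega,
      by simp only [Fin.val_mk]; omega⟩, ?_⟩
    rw [Fperm_val, Ffun_win cf π w (by simp only [Fin.val_mk]; omega)
      (by simp only [Fin.val_mk]; omega)]
    have e1 : (⟨((⟨wstart cf π + (b:ℕ), hil⟩ : Fin (M+d+2)) : ℕ) - wstart cf π,
        by simp only [Fin.val_mk]; omega⟩ : Fin (d+2)) = b :=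
      Fin.ext (by simp only [Fin.val_mk]; omega)
    rw [e1, hb, Equiv.apply_symm_apply]
    simp only [Fin.val_mk]
    omega

lemma Fperm_wstart_eq {π' : Equiv.Perm (Fin (M+1))} {w' : Equiv.Perm (Fin (d+2))}
    (h : Fperm cf π w = Fperm cf π' w') : wstart cf π = wstart cf π' := by
  have ha := wstart_le cf π
  have ha' := wstart_le cf π'
  rcases lt_trichotomy (wstart cf π) (wstart cf π') with hlt | he | hlt
  · exfalso
    set i : Fin (M+d+2) := ⟨wstart cf π, by omega⟩ with hi
    have hiv : (i:ℕ) = wstart cf π := rfl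
    have h1 := Ffun_win_range cf π w (i := i) (by omega) (by omega)
    have h2 := Ffun_out_range cf π' w' (i := i) (Or.inl (by omega))
    rw [← Ffun_eq_of_eq cf π w h i] at h2
    omega
  · exact he
  · exfalso
    set i : Fin (M+d+2) := ⟨wstart cf π', by omega⟩ with hi
    have hiv : (i:ℕ) = wstart cf π' := rfl
    have h1 := Ffun_win_range cf π' w' (i := i) (by omega) (by omega)
    have h2 := Ffun_out_range cf π w (i := i) (Or.inl (by omega))
    rw [Ffun_eq_of_eq cf π w h i] at h2
    omega

lemma Fperm_inj {π' : Equiv.Perm (Fin (M+1))} {w' : Equiv.Perm (Fin (d+2))}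
    (h : Fperm cf π w = Fperm cf π' w') : π = π' ∧ w = w' := by
  have hval := Ffun_eq_of_eq cf π w h
  have haa := Fperm_wstart_eq cf π w h
  have ha := wstart_le cf π
  have ha' := wstart_le cf π'
  constructor
  · apply Equiv.ext
    intro p
    have hp := Nat.lt_succ_iff.mp p.isLt
    rcases lt_trichotomy (p : ℕ) (wstart cf π) with hc | hc | hc
    · obtain ⟨i, hiv⟩ : ∃ i : Fin (M+d+2), (i:ℕ) = (p:ℕ) := ⟨⟨(p:ℕ), by omega⟩, rfl⟩
      have e1 := Ffun_lo cf π w (i := i) (by omega)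
      have e2 := Ffun_lo cf π' w' (i := i) (by omega)
      rw [hval i, e2] at e1
      have e0 := (liftv_strictMono (cf:ℕ) d).injective e1.symm
      have e3 : (⟨(i:ℕ), by omega⟩ : Fin (M+1)) = p := Fin.ext (by simp only [Fin.val_mk]; omega)
      rw [e3] at e0
      exact Fin.ext e0
    · have hw1 : wstart cf π = ((π.symm cf : Fin (M+1)) : ℕ) := rfl
      have hw2 : wstart cf π' = ((π'.symm cf : Fin (M+1)) : ℕ) := rfl
      have e1 : p = π.symm cf := Fin.ext (by omega)
      have e2 : p = π'.symm cf := Fin.ext (by omega)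
      rw [show π p = cf by rw [e1]; exact Equiv.apply_symm_apply π cf,
        show π' p = cf by rw [e2]; exact Equiv.apply_symm_apply π' cf]
    · obtain ⟨i, hiv⟩ : ∃ i : Fin (M+d+2), (i:ℕ) = (p:ℕ) + (d+1) :=
        ⟨⟨(p:ℕ) + (d+1), by omega⟩, rfl⟩
      have e1 := Ffun_hi cf π w (i := i) (by omega)
      have e2 := Ffun_hi cf π' w' (i := i) (by omega)
      rw [hval i, e2] at e1
      have e0 := (liftv_strictMono (cf:ℕ) d).injective e1.symm
      have e3 : (⟨(i:ℕ) - (d+1), by omega⟩ : Fin (M+1)) = p :=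
        Fin.ext (by simp only [Fin.val_mk]; omega)
      rw [e3] at e0
      exact Fin.ext e0
  · apply Equiv.ext
    intro j
    have hj := j.isLt
    apply Fin.ext
    obtain ⟨i, hiv⟩ : ∃ i : Fin (M+d+2), (i:ℕ) = wstart cf π + (j:ℕ) :=
      ⟨⟨wstart cf π + (j:ℕ), by omega⟩, rfl⟩
    have e1 := Ffun_win cf π w (i := i) (by omega) (by omega)
    have e2 := Ffun_win cf π' w' (i := i) (by omega) (by omega)
    rw [hval i, e2] at e1
    have e3 : (⟨(i:ℕ) - wstart cf π, by omega⟩ : Fin (d+2)) = j :=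
      Fin.ext (by simp only [Fin.val_mk]; omega)
    have e4 : (⟨(i:ℕ) - wstart cf π', by omega⟩ : Fin (d+2)) = j :=
      Fin.ext (by simp only [Fin.val_mk]; omega)
    rw [e3] at e1
    rw [e4] at e1
    omega


/-- inverse of `liftv` on out-of-window values. -/
def unlf (c d v : ℕ) : ℕ := if v < c then v else v - (d+1)

lemma liftv_unlf {c d v : ℕ} (h : v < c ∨ c + d + 1 < v) : liftv c d (unlf c d v) = v := by
  unfold liftv unlf; split_ifs <;> omega

lemma unlf_out {c d v : ℕ} (h : v < c ∨ c + d + 1 < v) :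
    (v < c ∧ unlf c d v = v) ∨ (c + d + 1 < v ∧ unlf c d v = v - (d+1) ∧ c < unlf c d v) := by
  unfold unlf; split_ifs <;> omega

lemma Fperm_surj (σ : Equiv.Perm (Fin (M+d+2))) {c A : ℕ} (hc : c ≤ M) (hA : A ≤ M)
    (hcl : ClusterAt (d+2) (c+1) (A+1) σ) :
    ∃ (π : Equiv.Perm (Fin (M+1))) (w : Equiv.Perm (Fin (d+2))),
      Fperm (⟨c, by omega⟩ : Fin (M+1)) π w = σ := by
  classical
  unfold ClusterAt at hcl
  -- ℕ-valued version of σ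
  set σv : ℕ → ℕ := fun x => if h : x < M+d+2 then ((σ ⟨x, h⟩ : Fin (M+d+2)) : ℕ) else 0 with hσv
  have hσv_eq : ∀ i : Fin (M+d+2), ((σ i : Fin (M+d+2)) : ℕ) = σv (i:ℕ) := by
    intro i
    rw [hσv]
    simp only [dif_pos i.isLt]
  have hσv_lt : ∀ x, x < M+d+2 → σv x < M+d+2 := by
    intro x hx
    rw [hσv]
    simp only [dif_pos hx]
    exact (σ ⟨x, hx⟩).isLt
  have hσv_inj : ∀ x y, x < M+d+2 → y < M+d+2 → σv x = σv y → x = y := by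
    intro x y hx hy hxy
    rw [hσv] at hxy
    simp only [dif_pos hx, dif_pos hy] at hxy
    have := σ.injective (Fin.ext hxy)
    exact congrArg Fin.val this
  -- window values
  have hwin : ∀ x, A ≤ x → x < A+(d+2) → c ≤ σv x ∧ σv x ≤ c+d+1 := by
    intro x h1 h2
    have hx : x < M+d+2 := by omega
    have hsx : σv x = ((σ ⟨x, hx⟩ : Fin (M+d+2)) : ℕ) := by
      rw [hσv]; simp only [dif_pos hx]
    have hmem : ((σ ⟨x, hx⟩ : Fin (M+d+2)) : ℕ) + 1 ∈ Finset.Ico (c+1) (c+1+(d+2)) := by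
      rw [← hcl]
      exact Finset.mem_image_of_mem _
        (Finset.mem_filter.mpr ⟨Finset.mem_univ _, by simp only [Fin.val_mk]; omega⟩)
    rw [Finset.mem_Ico] at hmem
    omega
  have hout : ∀ x, x < M+d+2 → ¬(A ≤ x ∧ x < A+(d+2)) → σv x < c ∨ c+d+1 < σv x := by
    intro x hx hnx
    by_contra hcon
    push_neg at hcon
    have hmem : σv x + 1 ∈ Finset.Ico (c+1) (c+1+(d+2)) := by
      rw [Finset.mem_Ico]; omega
    rw [← hcl] at hmem
    obtain ⟨i, hi, hval⟩ := Finset.mem_image.mp hmem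
    rw [Finset.mem_filter] at hi
    have hieq : (i:ℕ) = x := by
      apply hσv_inj _ _ i.isLt hx
      rw [← hσv_eq i]
      omega
    omega
  -- the window pattern w
  have hwb : ∀ j : Fin (d+2), σv (A + (j:ℕ)) - c < d + 2 := by
    intro j
    have := hwin (A + (j:ℕ)) (by omega) (by have := j.isLt; omega)
    omega
  set wfun : Fin (d+2) → Fin (d+2) := fun j => ⟨σv (A + (j:ℕ)) - c, hwb j⟩ with hwfun
  have hwinj : Function.Injective wfun := by
    intro j j' he
    have hv := congrArg Fin.val he
    simp only [hwfun, Fin.val_mk] at hv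
    have h1 := hwin (A + (j:ℕ)) (by omega) (by have := j.isLt; omega)
    have h2 := hwin (A + (j':ℕ)) (by omega) (by have := j'.isLt; omega)
    have := hσv_inj (A + (j:ℕ)) (A + (j':ℕ)) (by have := j.isLt; omega)
      (by have := j'.isLt; omega) (by omega)
    exact Fin.ext (by omega)
  set ws : Equiv.Perm (Fin (d+2)) :=
    Equiv.ofBijective wfun ((Finite.injective_iff_bijective).mp hwinj) with hws_def
  have hws_val : ∀ j : Fin (d+2), ((ws j : Fin (d+2)) : ℕ) = σv (A + (j:ℕ)) - c := fun j => rfl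
  -- the collapsed pattern π
  set pv : ℕ → ℕ := fun p =>
    if p < A then unlf c d (σv p) else if p = A then c else unlf c d (σv (p + (d+1))) with hpv
  have pv_lo : ∀ x, x < A → pv x = unlf c d (σv x) := by
    intro x h; simp only [hpv]; rw [if_pos h]
  have pv_mid : pv A = c := by simp [hpv]
  have pv_hi : ∀ x, A < x → pv x = unlf c d (σv (x + (d+1))) := by
    intro x h; simp only [hpv]; rw [if_neg (by omega), if_neg (by omega)]
  have key : ∀ x, x ≤ M → x ≠ A → ∃ y, y < M+d+2 ∧ ¬(A ≤ y ∧ y < A+(d+2))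
      ∧ pv x = unlf c d (σv y) ∧ (x < A → y = x) ∧ (A < x → y = x+(d+1)) := by
    intro x hx hne
    rcases lt_or_gt_of_ne hne with h | h
    · exact ⟨x, by omega, by omega, pv_lo x h, fun _ => rfl, by omega⟩
    · exact ⟨x+(d+1), by omega, by omega, pv_hi x h, by omega, fun _ => rfl⟩
  have hpv_le : ∀ p, p ≤ M → pv p ≤ M := by
    intro p hp
    by_cases hne : p = A
    · rw [hne, pv_mid]; omega
    · obtain ⟨y, hy1, hy2, hy3, _, _⟩ := key p hp hne
      have ho := hout y hy1 hy2
      have hl := hσv_lt y hy1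
      rw [hy3]
      unfold unlf; split_ifs <;> omega
  set pfun : Fin (M+1) → Fin (M+1) :=
    fun p => ⟨pv (p:ℕ), Nat.lt_succ_iff.mpr (hpv_le (p:ℕ) (Nat.lt_succ_iff.mp p.isLt))⟩
    with hpfun
  have hpinj : Function.Injective pfun := by
    intro p p' he
    have hv : pv (p:ℕ) = pv (p':ℕ) := congrArg Fin.val he
    have hp := Nat.lt_succ_iff.mp p.isLt
    have hp' := Nat.lt_succ_iff.mp p'.isLt
    apply Fin.ext
    by_contra hne
    by_cases cA : (p:ℕ) = A
    · have cA' : (p':ℕ) ≠ A := by omega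
      obtain ⟨y, hy1, hy2, hy3, _, _⟩ := key (p':ℕ) hp' cA'
      have ho := unlf_out (d := d) (hout y hy1 hy2)
      rw [cA, pv_mid, hy3] at hv
      omega
    · by_cases cA' : (p':ℕ) = A
      · obtain ⟨y, hy1, hy2, hy3, _, _⟩ := key (p:ℕ) hp cA
        have ho := unlf_out (d := d) (hout y hy1 hy2)
        rw [cA', pv_mid, hy3] at hv
        omega
      · obtain ⟨y, hy1, hy2, hy3, hy4, hy5⟩ := key (p:ℕ) hp cA
        obtain ⟨y', hy1', hy2', hy3', hy4', hy5'⟩ := key (p':ℕ) hp' cA'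
        rw [hy3, hy3'] at hv
        have ho := unlf_out (d := d) (hout y hy1 hy2)
        have ho' := unlf_out (d := d) (hout y' hy1' hy2')
        have hyy : σv y = σv y' := by omega
        have := hσv_inj y y' hy1 hy1' hyy
        omega
  set ps : Equiv.Perm (Fin (M+1)) :=
    Equiv.ofBijective pfun ((Finite.injective_iff_bijective).mp hpinj) with hps_def
  have hps_val : ∀ p : Fin (M+1), ((ps p : Fin (M+1)) : ℕ) = pv (p:ℕ) := fun p => rfl
  refine ⟨ps, ws, ?_⟩
  have hcm : c < M + 1 := by omega
  have hAm : A < M + 1 := by omega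
  have hwstart : wstart (⟨c, hcm⟩ : Fin (M+1)) ps = A := by
    have hpA : ps ⟨A, hAm⟩ = ⟨c, hcm⟩ := by
      apply Fin.ext
      rw [hps_val]
      simp only [Fin.val_mk]
      exact pv_mid
    unfold wstart
    rw [(Equiv.symm_apply_eq ps).mpr hpA.symm]
  apply Equiv.ext
  intro i
  apply Fin.ext
  rw [Fperm_val, hσv_eq i]
  have hil := i.isLt
  rcases Nat.lt_or_ge ((i:ℕ) : ℕ) A with hcase | hcase
  · rw [Ffun_lo ⟨c, hcm⟩ ps ws (by omega)]
    have e1 : ((ps ⟨(i:ℕ), by omega⟩ : Fin (M+1)) : ℕ) = unlf c d (σv (i:ℕ)) := by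
      rw [hps_val]
      simp only [Fin.val_mk]
      exact pv_lo (i:ℕ) hcase
    rw [show ((⟨c, hcm⟩ : Fin (M+1)) : ℕ) = c from rfl] at *
    rw [e1]
    exact liftv_unlf (hout (i:ℕ) (by omega) (by omega))
  · by_cases hwc : ((i:ℕ) : ℕ) < A + (d+2)
    swap
    · -- high positions
      rw [Ffun_hi ⟨c, hcm⟩ ps ws (by omega)]
      have e1 : ((ps ⟨(i:ℕ) - (d+1), by omega⟩ : Fin (M+1)) : ℕ)
          = unlf c d (σv ((i:ℕ) - (d+1) + (d+1))) := by
        rw [hps_val]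
        simp only [Fin.val_mk]
        exact pv_hi _ (by omega)
      rw [show ((⟨c, hcm⟩ : Fin (M+1)) : ℕ) = c from rfl, e1,
        show (i:ℕ) - (d+1) + (d+1) = (i:ℕ) from by omega]
      exact liftv_unlf (hout (i:ℕ) (by omega) (by omega))
    -- window positions
    rw [Ffun_win ⟨c, hcm⟩ ps ws (by omega) (by omega)]
    rw [show ((⟨c, hcm⟩ : Fin (M+1)) : ℕ) = c from rfl]
    rw [hws_val]
    have e2 : A + ((⟨(i:ℕ) - wstart ⟨c, hcm⟩ ps, by omega⟩ : Fin (d+2)) : ℕ) = (i:ℕ) := by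
      simp only [Fin.val_mk]
      omega
    rw [e2]
    have := hwin (i:ℕ) (by omega) (by omega)
    omega

end Construction

lemma ncard_set_prod {α β : Type*} (s : Set α) (t : Set β) :
    (s ×ˢ t).ncard = s.ncard * t.ncard := by
  rw [← Nat.card_coe_set_eq, ← Nat.card_coe_set_eq, ← Nat.card_coe_set_eq,
    Nat.card_congr (Equiv.Set.prod s t), Nat.card_prod]

lemma cluster_count_core {m : ℕ} (τ : Equiv.Perm (Fin m)) (hτ : ClusterFree τ)
    (M d c : ℕ) (hc : c ≤ M) :
    (ClusterEvent (M+d+2) (d+2) (c+1) ∩ AvoidSet (M+d+2) τ).ncard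
      = (AvoidSet (M+1) τ).ncard * (AvoidSet (d+2) τ).ncard := by
  classical
  have hcm : c < M + 1 := by omega
  set cf : Fin (M+1) := ⟨c, hcm⟩ with hcf
  set E : Equiv.Perm (Fin (M+1)) × Equiv.Perm (Fin (d+2)) → Equiv.Perm (Fin (M+d+2)) :=
    fun p => Fperm cf p.1 p.2 with hE
  have hbij : Set.BijOn E ((AvoidSet (M+1) τ) ×ˢ (AvoidSet (d+2) τ))
      (ClusterEvent (M+d+2) (d+2) (c+1) ∩ AvoidSet (M+d+2) τ) := by
    refine ⟨?_, ?_, ?_⟩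
    · rintro ⟨π, w⟩ ⟨hπ, hw⟩
      constructor
      · refine ⟨wstart cf π + 1, by omega, ?_, ?_⟩
        · have := wstart_le cf π
          omega
        · have := Fperm_clusterAt cf π w
          rwa [hcf] at this
      · intro hcon
        rcases contains_split cf π w τ hτ hcon with h | h
        · exact hπ h
        · exact hw h
    · rintro ⟨π, w⟩ _ ⟨π', w'⟩ _ he
      obtain ⟨h1, h2⟩ := Fperm_inj cf π w he
      rw [Prod.mk.injEq]
      exact ⟨h1, h2⟩
    · rintro σ ⟨⟨a, ha1, ha2, hcl⟩, hav⟩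
      have ha2' : a - 1 ≤ M := by omega
      have hcl' : ClusterAt (d+2) (c+1) ((a-1)+1) σ := by
        rwa [show (a-1)+1 = a from by omega]
      obtain ⟨π, w, hπw⟩ := Fperm_surj σ hc ha2' hcl'
      have hπw' : Fperm cf π w = σ := hπw
      refine ⟨(π, w), ⟨?_, ?_⟩, hπw'⟩
      · intro hcon
        exact hav (by rw [← hπw']; exact contains_pi cf π w τ hcon)
      · intro hcon
        exact hav (by rw [← hπw']; exact contains_w cf π w τ hcon)
  rw [← hbij.image_eq, Set.ncard_image_of_injOn hbij.injOn, ncard_set_prod]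

lemma cluster_count {m : ℕ} (τ : Equiv.Perm (Fin m)) (hτ : ClusterFree τ)
    (n l k : ℕ) (hl : 2 ≤ l) (hln : l ≤ n) (hk1 : 1 ≤ k) (hk2 : k ≤ n - l + 1) :
    (ClusterEvent n l k ∩ AvoidSet n τ).ncard
      = (AvoidSet (n - l + 1) τ).ncard * (AvoidSet l τ).ncard := by
  obtain ⟨d, rfl⟩ : ∃ d, l = d + 2 := ⟨l - 2, by omega⟩
  obtain ⟨M, rfl⟩ : ∃ M, n = M + d + 2 := ⟨n - (d + 2), by omega⟩
  obtain ⟨c, rfl⟩ : ∃ c, k = c + 1 := ⟨k - 1, by omega⟩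
  have he : M + d + 2 - (d + 2) + 1 = M + 1 := by omega
  rw [he]
  exact cluster_count_core τ hτ M d c (by omega)

lemma avoidSet_nonempty {m : ℕ} (hm : 2 ≤ m) (τ : Equiv.Perm (Fin m)) (n : ℕ) :
    (AvoidSet n τ).Nonempty := by
  have h0 : (0:ℕ) < m := by omega
  have h1 : (1:ℕ) < m := by omega
  set i0 : Fin m := ⟨0, h0⟩ with hi0
  set i1 : Fin m := ⟨1, h1⟩ with hi1
  have hne : τ i0 ≠ τ i1 := by
    intro h
    have := congrArg Fin.val (τ.injective h)
    simp [hi0, hi1] at this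
  rcases lt_or_gt_of_ne hne with h | h
  · refine ⟨Fin.revPerm, ?_⟩
    rintro ⟨f, hf, hiff⟩
    have hlt : f i0 < f i1 := hf (show i0 < i1 from by rw [Fin.lt_def]; simp [hi0, hi1])
    have h2 := (hiff i0 i1).mpr h
    simp only [Fin.revPerm_apply] at h2
    rw [Fin.rev_lt_rev] at h2
    exact absurd h2 (not_lt.mpr hlt.le)
  · refine ⟨Equiv.refl _, ?_⟩
    rintro ⟨f, hf, hiff⟩
    have hlt : f i0 < f i1 := hf (show i0 < i1 from by rw [Fin.lt_def]; simp [hi0, hi1])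
    have h2 := (hiff i0 i1).mp (by simpa using hlt)
    exact absurd h2 (not_lt.mpr h.le)

/-- exact limit `|S_l(τ)|/L^{l-1}` for cluster-free `τ`. -/
theorem avoid_cluster_limit_clusterFree (m : ℕ) (hm : 2 ≤ m) (τ : Equiv.Perm (Fin m))
    (hτ : ClusterFree τ) (L : ℝ) (hL : 0 < L)
    (hconv : Filter.Tendsto
      (fun n : ℕ => ((AvoidSet (n + 1) τ).ncard : ℝ) / ((AvoidSet n τ).ncard : ℝ))
      Filter.atTop (nhds L))
    (l : ℕ) (hl : 2 ≤ l) (k : ℕ → ℕ) (hk : ∀ n : ℕ, 1 ≤ k n ∧ k n ≤ n - l + 1) :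
    Filter.Tendsto
      (fun n : ℕ => ((ClusterEvent n l (k n) ∩ AvoidSet n τ).ncard : ℝ) /
        ((AvoidSet n τ).ncard : ℝ)) Filter.atTop
      (nhds (((AvoidSet l τ).ncard : ℝ) / L ^ (l - 1))) := by
  classical
  set C : ℕ → ℝ := fun n => ((AvoidSet n τ).ncard : ℝ) with hC
  have hpos : ∀ n, 0 < C n := by
    intro n
    have hne := avoidSet_nonempty hm τ n
    have hfin : (AvoidSet n τ).Finite := Set.toFinite _
    have hp : 0 < (AvoidSet n τ).ncard := (Set.ncard_pos hfin).mpr hne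
    simp only [hC]
    exact_mod_cast hp
  have hQ : ∀ j : ℕ, Tendsto (fun n => C (n + j) / C n) atTop (nhds (L ^ j)) := by
    intro j
    induction j with
    | zero =>
      have he : (fun n => C (n + 0) / C n) = fun _ => (1:ℝ) := by
        funext n
        rw [Nat.add_zero, div_self (ne_of_gt (hpos n))]
      rw [he, pow_zero]
      exact tendsto_const_nhds
    | succ j ih =>
      have h1 : Tendsto (fun n => C (n + 1 + j) / C (n + 1)) atTop (nhds (L ^ j)) :=
        ih.comp (tendsto_add_atTop_nat 1)
      have h2 := h1.mul hconv
      rw [← pow_succ] at h2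
      apply h2.congr
      intro n
      have hn1 := hpos (n+1)
      have hn := hpos n
      rw [show n + (j + 1) = n + 1 + j from by omega]
      field_simp
      simp only [hC] at hn hn1 ⊢
      field_simp
  have hsub : Tendsto (fun n : ℕ => n - l + 1) atTop atTop := by
    apply tendsto_atTop_atTop.mpr
    intro b
    exact ⟨b + l, fun n hn => by omega⟩
  have hQc : Tendsto (fun n : ℕ => C (n - l + 1 + (l - 1)) / C (n - l + 1)) atTop
      (nhds (L ^ (l - 1))) := (hQ (l - 1)).comp hsub
  have hfinal : Tendsto
      (fun n : ℕ => ((AvoidSet l τ).ncard : ℝ) / (C (n - l + 1 + (l - 1)) / C (n - l + 1)))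
      atTop (nhds (((AvoidSet l τ).ncard : ℝ) / L ^ (l - 1))) :=
    Tendsto.div tendsto_const_nhds hQc (ne_of_gt (pow_pos hL _))
  apply hfinal.congr'
  filter_upwards [eventually_ge_atTop l] with n hn
  have hcnt := cluster_count τ hτ n l (k n) hl hn (hk n).1 (hk n).2
  have he1 : n - l + 1 + (l - 1) = n := by omega
  rw [he1]
  have hn0 := hpos n
  have hnl := hpos (n - l + 1)
  rw [hcnt]
  push_cast
  rw [div_div_eq_mul_div, div_eq_div_iff (by positivity) (ne_of_gt hn0)]
  ring
end
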